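/- arXiv:2508.07478 — 6 statements merged into one kernel-verified Lean document; each statement's English description precedes it below -/
import Mathlib

section
/- For a prime p ≥ 3, the Bernoulli numbers satisfy B_{2(p-1)} - B_{p-1} ≡ W_p (mod p), where W_p = ((p-1)! + 1)/p is the Wilson quotient; i.e., the p-adic valuation of B_{2(p-1)} - B_{p-1} - W_p is at least 1. -/
open Finset

section Aux

set_option linter.unusedSectionVars false

/-- Faulhaber's formula, rearranged to isolate the top Bernoulli number. -/
lemma lehmer_faulhaber_q (p m : ℕ) :
    (∑ k ∈ range p, (k : ℚ) ^ m) = (p : ℚ) * bernoulli m +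
      ∑ i ∈ range m, bernoulli i * (m.choose i) * (p : ℚ) ^ (m + 1 - i) / (m + 1 - i : ℕ) := by
  rw [sum_range_pow p m, Finset.sum_range_succ]
  have h1 : (bernoulli m * ((m + 1).choose m) * (p : ℚ) ^ (m + 1 - m) / (m + 1) : ℚ)
      = (p : ℚ) * bernoulli m := by
    rw [Nat.choose_succ_self_right, Nat.add_sub_cancel_left, pow_one]
    have : ((m : ℚ) + 1) ≠ 0 := by positivity
    field_simp
    push_cast; ring
  rw [h1, add_comm]
  congr 1
  refine Finset.sum_congr rfl fun i hi => ?_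
  have hi' : i < m := Finset.mem_range.mp hi
  have hne1 : ((m : ℚ) + 1) ≠ 0 := by positivity
  have hne2 : ((m + 1 - i : ℕ) : ℚ) ≠ 0 := by
    have : 0 < m + 1 - i := by omega
    exact_mod_cast this.ne'
  rw [div_eq_div_iff (by exact_mod_cast hne1) hne2]
  have key : (m.choose i) * (m + 1) = (m + 1).choose i * (m + 1 - i) := Nat.choose_mul_succ_eq m i
  have keyq : ((m.choose i : ℚ)) * ((m : ℚ) + 1)
      = ((m + 1).choose i : ℚ) * ((m + 1 - i : ℕ) : ℚ) := by
    exact_mod_cast congrArg (Nat.cast : ℕ → ℚ) key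
  linear_combination (-(bernoulli i * (p : ℚ) ^ (m + 1 - i))) * keyq

lemma lehmer_five_pow_aux : ∀ k : ℕ, 1 ≤ k → k + 3 ≤ 5 ^ k := by
  intro k hk
  induction k with
  | zero => omega
  | succ n ih =>
    rcases Nat.eq_zero_or_pos n with h | h
    · subst h; norm_num
    · have h5 : (5 : ℕ) ^ n ≥ 1 := Nat.one_le_pow _ _ (by norm_num)
      have := ih h
      have : 5 ^ (n + 1) = 5 * 5 ^ n := by ring
      omega

lemma lehmer_sq_dvd_pow_sub (c : ℤ) (n : ℕ) : c ^ 2 ∣ (1 + c) ^ n - 1 - n * c := by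
  induction n with
  | zero => simp
  | succ n ih =>
    have h : (1 + c) ^ (n + 1) - 1 - (n + 1 : ℕ) * c
        = (1 + c) * ((1 + c) ^ n - 1 - n * c) + n * c ^ 2 := by
      push_cast
      ring
    rw [h]
    exact dvd_add (Dvd.dvd.mul_left ih _) (Dvd.dvd.mul_left dvd_rfl _)

variable {p : ℕ} [hp : Fact p.Prime]

lemma lehmer_norm_nat_eq_one_of_not_dvd {u : ℕ} (h : ¬ p ∣ u) : ‖(u : ℚ_[p])‖ = 1 := by
  have h1 : ‖((u : ℤ) : ℚ_[p])‖ ≤ 1 := Padic.norm_int_le_one _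
  have h2 : ¬ ‖((u : ℤ) : ℚ_[p])‖ < 1 := by
    rw [Padic.norm_intCast_lt_one_iff]
    exact_mod_cast h
  have := le_antisymm h1 (not_lt.mp h2)
  simpa using this

lemma lehmer_norm_nat_cast_eq (j : ℕ) (hj : j ≠ 0) :
    ‖(j : ℚ_[p])‖ = (p : ℝ) ^ (-(j.factorization p : ℤ)) := by
  conv_lhs => rw [← Nat.ordProj_mul_ordCompl_eq_self j p]
  push_cast
  rw [norm_mul, norm_pow, Padic.norm_p,
    lehmer_norm_nat_eq_one_of_not_dvd (Nat.not_dvd_ordCompl hp.out hj), mul_one,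
    ← zpow_natCast, inv_zpow, ← zpow_neg]

lemma lehmer_norm_pPow_div_nat_le {j c : ℕ} (hj : j ≠ 0) (hc : j.factorization p + c ≤ j) :
    ‖((p : ℚ_[p]) ^ j / (j : ℚ_[p]))‖ ≤ (p : ℝ) ^ (-(c : ℤ)) := by
  have hp1 : (1 : ℝ) < p := by exact_mod_cast hp.out.one_lt
  have hp0 : (0 : ℝ) < p := lt_trans one_pos hp1
  rw [norm_div, norm_pow, Padic.norm_p, lehmer_norm_nat_cast_eq j hj]
  rw [inv_pow, ← zpow_natCast, ← zpow_neg, ← zpow_sub₀ hp0.ne']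
  apply zpow_le_zpow_right₀ hp1.le
  omega

lemma lehmer_factorization_succ_le {j : ℕ} (hj : 2 ≤ j) : j.factorization p + 1 ≤ j := by
  have h1 : p ^ j.factorization p ≤ j := Nat.ordProj_le p (by omega)
  have h2 : j.factorization p < p ^ j.factorization p :=
    Nat.lt_pow_self hp.out.one_lt
  omega

lemma lehmer_factorization_add_three_le (hp5 : 5 ≤ p) {j : ℕ} (hj : 3 ≤ j) :
    j.factorization p + 3 ≤ j := by
  rcases Nat.eq_zero_or_pos (j.factorization p) with h | h
  · omega
  · have h1 : p ^ j.factorization p ≤ j := Nat.ordProj_le p (by omega)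
    have h2 : 5 ^ j.factorization p ≤ p ^ j.factorization p :=
      Nat.pow_le_pow_left hp5 _
    have h3 := lehmer_five_pow_aux (j.factorization p) h
    omega

/-- Faulhaber's formula transported to `ℚ_[p]` with `n = p`. -/
lemma lehmer_key_expansion (m : ℕ) :
    ((∑ k ∈ range p, k ^ m : ℕ) : ℚ_[p]) = (p : ℚ_[p]) * ((bernoulli m : ℚ) : ℚ_[p]) +
      ∑ i ∈ range m, ((bernoulli i : ℚ) : ℚ_[p]) * (m.choose i : ℚ_[p])
        * (p : ℚ_[p]) ^ (m + 1 - i) / ((m + 1 - i : ℕ) : ℚ_[p]) := by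
  have h := congrArg (fun q : ℚ => (q : ℚ_[p])) (lehmer_faulhaber_q p m)
  push_cast at h ⊢
  convert h using 2

lemma lehmer_norm_nat_le_one (n : ℕ) : ‖(n : ℚ_[p])‖ ≤ 1 := by
  have := Padic.norm_int_le_one (p := p) n
  simpa using this

/-- The von Staudt–Clausen type bound: `‖B_n‖_p ≤ p`. -/
lemma lehmer_norm_bernoulli_le (n : ℕ) : ‖((bernoulli n : ℚ) : ℚ_[p])‖ ≤ p := by
  have hp1 : (1 : ℝ) < p := by exact_mod_cast hp.out.one_lt
  have hp0 : (0 : ℝ) < p := lt_trans one_pos hp1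
  induction n using Nat.strong_induction_on with
  | _ n ih =>
    rcases Nat.eq_zero_or_pos n with rfl | hn
    · simp [bernoulli_zero]
      exact hp.out.one_lt.le
    have key := lehmer_key_expansion (p := p) n
    have hPB : (p : ℚ_[p]) * ((bernoulli n : ℚ) : ℚ_[p]) =
        ((∑ k ∈ range p, k ^ n : ℕ) : ℚ_[p]) -
        ∑ i ∈ range n, ((bernoulli i : ℚ) : ℚ_[p]) * (n.choose i : ℚ_[p])
          * (p : ℚ_[p]) ^ (n + 1 - i) / ((n + 1 - i : ℕ) : ℚ_[p]) := by
      rw [key]; ring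
    have hT : ‖∑ i ∈ range n, ((bernoulli i : ℚ) : ℚ_[p]) * (n.choose i : ℚ_[p])
          * (p : ℚ_[p]) ^ (n + 1 - i) / ((n + 1 - i : ℕ) : ℚ_[p])‖ ≤ 1 := by
      apply IsUltrametricDist.norm_sum_le_of_forall_le_of_nonneg zero_le_one
      intro i hi
      have hi' : i < n := Finset.mem_range.mp hi
      rw [mul_div_assoc, norm_mul, norm_mul]
      have h1 : ‖((bernoulli i : ℚ) : ℚ_[p])‖ ≤ p := ih i hi'
      have h2 : ‖(n.choose i : ℚ_[p])‖ ≤ 1 := lehmer_norm_nat_le_one _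
      have h3 : ‖(p : ℚ_[p]) ^ (n + 1 - i) / ((n + 1 - i : ℕ) : ℚ_[p])‖
          ≤ (p : ℝ) ^ (-(1 : ℕ) : ℤ) :=
        lehmer_norm_pPow_div_nat_le (by omega) (lehmer_factorization_succ_le (by omega))
      have h3' : ‖(p : ℚ_[p]) ^ (n + 1 - i) / ((n + 1 - i : ℕ) : ℚ_[p])‖ ≤ (p : ℝ)⁻¹ := by
        simpa using h3
      calc ‖((bernoulli i : ℚ) : ℚ_[p])‖ * ‖(n.choose i : ℚ_[p])‖ *
            ‖(p : ℚ_[p]) ^ (n + 1 - i) / ((n + 1 - i : ℕ) : ℚ_[p])‖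
          ≤ (p : ℝ) * 1 * (p : ℝ)⁻¹ := by
            apply mul_le_mul _ h3' (norm_nonneg _) (by positivity)
            apply mul_le_mul h1 h2 (norm_nonneg _) (by positivity)
        _ = 1 := by field_simp
    have hS : ‖((∑ k ∈ range p, k ^ n : ℕ) : ℚ_[p])‖ ≤ 1 := lehmer_norm_nat_le_one _
    have h1 : ‖(p : ℚ_[p]) * ((bernoulli n : ℚ) : ℚ_[p])‖ ≤ 1 := by
      rw [hPB, sub_eq_add_neg]
      refine le_trans (Padic.nonarchimedean _ _) (max_le hS ?_)
      rwa [norm_neg]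
    rw [norm_mul, Padic.norm_p] at h1
    calc ‖((bernoulli n : ℚ) : ℚ_[p])‖
        = (p : ℝ) * ((p : ℝ)⁻¹ * ‖((bernoulli n : ℚ) : ℚ_[p])‖) := by field_simp
      _ ≤ (p : ℝ) * 1 := by
          apply mul_le_mul_of_nonneg_left h1 hp0.le
      _ = p := mul_one _

/-- Norm bound for the Faulhaber tail when `p ≥ 5` and `m ≥ 4` is even. -/
lemma lehmer_norm_tail_le (hp5 : 5 ≤ p) {m : ℕ} (hme : Even m) (hm4 : 4 ≤ m) :
    ‖∑ i ∈ range m, ((bernoulli i : ℚ) : ℚ_[p]) * (m.choose i : ℚ_[p])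
        * (p : ℚ_[p]) ^ (m + 1 - i) / ((m + 1 - i : ℕ) : ℚ_[p])‖ ≤ (p : ℝ) ^ (-2 : ℤ) := by
  have hp1 : (1 : ℝ) < p := by exact_mod_cast hp.out.one_lt
  have hp0 : (0 : ℝ) < p := lt_trans one_pos hp1
  apply IsUltrametricDist.norm_sum_le_of_forall_le_of_nonneg (by positivity)
  intro i hi
  have hi' : i < m := Finset.mem_range.mp hi
  by_cases hlast : i = m - 1
  · have hodd : Odd i := by
      subst hlast
      rcases hme with ⟨t, ht⟩
      exact ⟨t - 1, by omega⟩
    have hne : i ≠ 1 := by omega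
    have : bernoulli i = 0 := by
      rw [bernoulli_eq_bernoulli'_of_ne_one hne]
      exact bernoulli'_eq_zero_of_odd hodd (by omega)
    rw [this]
    simp
  · have hj3 : 3 ≤ m + 1 - i := by omega
    rw [mul_div_assoc, norm_mul, norm_mul]
    have h1 : ‖((bernoulli i : ℚ) : ℚ_[p])‖ ≤ p := lehmer_norm_bernoulli_le i
    have h2 : ‖(m.choose i : ℚ_[p])‖ ≤ 1 := lehmer_norm_nat_le_one _
    have h3 : ‖(p : ℚ_[p]) ^ (m + 1 - i) / ((m + 1 - i : ℕ) : ℚ_[p])‖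
        ≤ (p : ℝ) ^ (-(3 : ℕ) : ℤ) :=
      lehmer_norm_pPow_div_nat_le (by omega) (lehmer_factorization_add_three_le hp5 hj3)
    calc ‖((bernoulli i : ℚ) : ℚ_[p])‖ * ‖(m.choose i : ℚ_[p])‖ *
          ‖(p : ℚ_[p]) ^ (m + 1 - i) / ((m + 1 - i : ℕ) : ℚ_[p])‖
        ≤ (p : ℝ) * 1 * (p : ℝ) ^ (-(3 : ℕ) : ℤ) := by
          apply mul_le_mul _ h3 (norm_nonneg _) (by positivity)
          apply mul_le_mul h1 h2 (norm_nonneg _) (by positivity)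
      _ = (p : ℝ) ^ (-2 : ℤ) := by
          rw [mul_one, show (-(3 : ℕ) : ℤ) = (-3 : ℤ) by norm_num,
            show (-2 : ℤ) = (-3 : ℤ) + 1 by norm_num, zpow_add₀ hp0.ne', zpow_one]
          ring

lemma lehmer_prod_one_add_dvd {s : Finset ℕ} {a : ℕ → ℤ} (h : ∀ i ∈ s, (p : ℤ) ∣ a i) :
    (p : ℤ) ^ 2 ∣ ∏ i ∈ s, (1 + a i) - 1 - ∑ i ∈ s, a i := by
  induction s using Finset.cons_induction with
  | empty => simp
  | cons x s hx ih =>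
    rw [Finset.prod_cons, Finset.sum_cons]
    have hS : (p : ℤ) ∣ ∑ i ∈ s, a i := Finset.dvd_sum fun i hi => h i (Finset.mem_cons_of_mem hi)
    have hx' : (p : ℤ) ∣ a x := h x (Finset.mem_cons_self x s)
    have ih' := ih fun i hi => h i (Finset.mem_cons_of_mem hi)
    have key : (1 + a x) * ∏ i ∈ s, (1 + a i) - 1 - (a x + ∑ i ∈ s, a i)
        = (1 + a x) * (∏ i ∈ s, (1 + a i) - 1 - ∑ i ∈ s, a i)
          + a x * ∑ i ∈ s, a i := by ring
    rw [key]
    refine dvd_add (Dvd.dvd.mul_left ih' _) ?_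
    rw [sq]
    exact mul_dvd_mul hx' hS

lemma lehmer_fermat_int {k : ℕ} (hk : k ∈ Finset.Ico 1 p) : (p : ℤ) ∣ (k : ℤ) ^ (p - 1) - 1 := by
  rw [Finset.mem_Ico] at hk
  have h0 : ((k : ZMod p)) ≠ 0 := by
    rw [Ne, ZMod.natCast_eq_zero_iff]
    intro h
    have := Nat.le_of_dvd (by omega) h
    omega
  have := ZMod.pow_card_sub_one_eq_one h0
  rw [← ZMod.intCast_zmod_eq_zero_iff_dvd]
  push_cast
  rw [this]
  ring

lemma lehmer_wilson_int : (p : ℤ) ∣ ((p - 1).factorial : ℤ) + 1 := by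
  have := ZMod.wilsons_lemma p
  rw [← ZMod.intCast_zmod_eq_zero_iff_dvd]
  push_cast
  rw [this]
  ring

/-- The integer heart of Lehmer's congruence:
`∑ k^(2(p-1)) - ∑ k^(p-1) ≡ (p-1)! + 1 (mod p²)`. -/
lemma lehmer_int_congruence (hp3 : 3 ≤ p) :
    (p : ℤ) ^ 2 ∣ (∑ k ∈ range p, (k : ℤ) ^ (2 * (p - 1)) - ∑ k ∈ range p, (k : ℤ) ^ (p - 1)
      - (((p - 1).factorial : ℤ) + 1)) := by
  have hodd : Odd p := hp.out.odd_of_ne_two (by omega)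
  set m := p - 1 with hm
  have hm2 : 2 ≤ m := by omega
  have hsum : ∀ e : ℕ, e ≠ 0 → ∑ k ∈ range p, (k : ℤ) ^ e = ∑ k ∈ Finset.Ico 1 p, (k : ℤ) ^ e := by
    intro e he
    rw [Finset.range_eq_Ico, Finset.sum_eq_sum_Ico_succ_bot (by omega)]
    simp [zero_pow he]
  rw [hsum _ (by omega), hsum _ (by omega)]
  set a : ℕ → ℤ := fun k => (k : ℤ) ^ m - 1 with ha
  have hdvd_a : ∀ k ∈ Finset.Ico 1 p, (p : ℤ) ∣ a k := fun k hk => lehmer_fermat_int hk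
  have h1 : (p : ℤ) ^ 2 ∣ ∑ k ∈ Finset.Ico 1 p, (k : ℤ) ^ (2 * m)
      - ∑ k ∈ Finset.Ico 1 p, (k : ℤ) ^ m - ∑ k ∈ Finset.Ico 1 p, a k := by
    have : ∑ k ∈ Finset.Ico 1 p, (k : ℤ) ^ (2 * m)
        - ∑ k ∈ Finset.Ico 1 p, (k : ℤ) ^ m - ∑ k ∈ Finset.Ico 1 p, a k
        = ∑ k ∈ Finset.Ico 1 p, ((k : ℤ) ^ (2 * m) - (k : ℤ) ^ m - a k) := by
      rw [← Finset.sum_sub_distrib, ← Finset.sum_sub_distrib]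
    rw [this]
    apply Finset.dvd_sum
    intro k hk
    have hsq : (k : ℤ) ^ (2 * m) - (k : ℤ) ^ m - a k = (a k) ^ 2 := by
      have : (k : ℤ) ^ (2 * m) = ((k : ℤ) ^ m) ^ 2 := by
        rw [← pow_mul, mul_comm]
      rw [this, ha]
      ring
    rw [hsq]
    exact pow_dvd_pow_of_dvd (hdvd_a k hk) 2
  have hprod : ∏ k ∈ Finset.Ico 1 p, (1 + a k) = ((p - 1).factorial : ℤ) ^ m := by
    have e1 : ∀ k, 1 + a k = (k : ℤ) ^ m := by intro k; rw [ha]; ring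
    calc ∏ k ∈ Finset.Ico 1 p, (1 + a k) = ∏ k ∈ Finset.Ico 1 p, ((k : ℤ)) ^ m :=
          Finset.prod_congr rfl fun k _ => e1 k
      _ = (∏ k ∈ Finset.Ico 1 p, (k : ℤ)) ^ m := by rw [Finset.prod_pow]
      _ = ((p - 1).factorial : ℤ) ^ m := by
          have hset : Finset.Ico 1 p = Finset.Ico 1 ((p - 1) + 1) := by
            congr 1
            omega
          have : ∏ k ∈ Finset.Ico 1 p, (k : ℤ) = (((p - 1).factorial : ℕ) : ℤ) := by
            rw [← Nat.cast_prod, hset, Finset.prod_Ico_id_eq_factorial]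
          rw [this]
  have h2 : (p : ℤ) ^ 2 ∣ ((p - 1).factorial : ℤ) ^ m - 1 - ∑ k ∈ Finset.Ico 1 p, a k := by
    rw [← hprod]
    exact lehmer_prod_one_add_dvd hdvd_a
  have h3 : (p : ℤ) ^ 2 ∣ ((p - 1).factorial : ℤ) ^ m - 1 - (((p - 1).factorial : ℤ) + 1) := by
    set b : ℤ := ((p - 1).factorial : ℤ) + 1 with hb
    have hpb : (p : ℤ) ∣ b := lehmer_wilson_int
    have heven : Even m := by
      rcases hodd with ⟨t, ht⟩
      exact ⟨t, by omega⟩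
    have hF : ((p - 1).factorial : ℤ) ^ m = (1 + (-b)) ^ m := by
      rw [hb]
      rw [show (1 + -(((p - 1).factorial : ℤ) + 1)) = -(((p - 1).factorial : ℤ)) by ring]
      exact (heven.neg_pow _).symm
    have hkey := lehmer_sq_dvd_pow_sub (-b) m
    have hb2 : (p : ℤ) ^ 2 ∣ (-b) ^ 2 := by
      have he : (-b) ^ 2 = b * b := by ring
      rw [he, sq]
      exact mul_dvd_mul hpb hpb
    have h4 : (p : ℤ) ^ 2 ∣ (1 + (-b)) ^ m - 1 - m * (-b) := dvd_trans hb2 hkey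
    have hmp : ((m : ℤ) + 1) = (p : ℤ) := by omega
    have hmb : (p : ℤ) ^ 2 ∣ ((m : ℤ) + 1) * b := by
      rw [hmp, sq]
      exact mul_dvd_mul_left _ hpb
    have he2 : ((p - 1).factorial : ℤ) ^ m - 1 - b
        = ((1 + (-b)) ^ m - 1 - m * (-b)) - ((m : ℤ) + 1) * b := by
      rw [← hF]
      ring
    rw [he2]
    exact dvd_sub h4 hmb
  have hfinal : ∑ k ∈ Finset.Ico 1 p, (k : ℤ) ^ (2 * m) - ∑ k ∈ Finset.Ico 1 p, (k : ℤ) ^ m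
      - (((p - 1).factorial : ℤ) + 1)
      = (∑ k ∈ Finset.Ico 1 p, (k : ℤ) ^ (2 * m) - ∑ k ∈ Finset.Ico 1 p, (k : ℤ) ^ m
          - ∑ k ∈ Finset.Ico 1 p, a k)
        - (((p - 1).factorial : ℤ) ^ m - 1 - ∑ k ∈ Finset.Ico 1 p, a k)
        + (((p - 1).factorial : ℤ) ^ m - 1 - (((p - 1).factorial : ℤ) + 1)) := by ring
  rw [hfinal]
  exact dvd_add (dvd_sub h1 h2) h3

end Aux

/-- Lehmer's corollary: for a prime `p ≥ 3`,
`B_{2(p-1)} - B_{p-1} ≡ W_p (mod p)` where `W_p = ((p-1)! + 1)/p` is the Wilson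
quotient; i.e. the difference has `p`-adic valuation at least `1`, expressed as
`p`-adic norm at most `p⁻¹`. -/
theorem bernoulli_diff_wilson_congruence (p : ℕ) [hp : Fact p.Prime] (hp3 : 3 ≤ p) :
    ‖((bernoulli (2 * (p - 1)) - bernoulli (p - 1)
        - ((p - 1).factorial + 1 : ℚ) / p : ℚ) : ℚ_[p])‖ ≤ (p : ℝ)⁻¹ := by
  rcases eq_or_ne p 3 with rfl | hne3
  · -- p = 3 : direct computation
    have hval : (bernoulli (2 * (3 - 1)) - bernoulli (3 - 1)
        - ((3 - 1).factorial + 1 : ℚ) / ((3 : ℕ) : ℚ) : ℚ) = -6 / 5 := by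
      norm_num [bernoulli_eq_bernoulli'_of_ne_one, bernoulli'_four, bernoulli'_two,
        Nat.factorial]
    rw [hval]
    have hcast : ((-6 / 5 : ℚ) : ℚ_[3]) = ((-6 : ℤ) : ℚ_[3]) / ((5 : ℤ) : ℚ_[3]) := by
      push_cast
      ring
    rw [hcast, norm_div]
    have h6 : ‖((-6 : ℤ) : ℚ_[3])‖ ≤ (3 : ℝ) ^ (-(1 : ℕ) : ℤ) :=
      (Padic.norm_int_le_pow_iff_dvd _ _).mpr (by norm_num)
    have h5 : ‖((5 : ℤ) : ℚ_[3])‖ = 1 := by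
      refine le_antisymm (Padic.norm_int_le_one _) (not_lt.mp fun h => ?_)
      rw [Padic.norm_intCast_lt_one_iff] at h
      norm_num at h
    rw [h5, div_one]
    calc ‖((-6 : ℤ) : ℚ_[3])‖ ≤ (3 : ℝ) ^ (-(1 : ℕ) : ℤ) := h6
      _ = (3 : ℝ)⁻¹ := by norm_num
  · -- p ≥ 5
    have hp5 : 5 ≤ p := by
      rcases Nat.lt_or_ge p 5 with h | h
      · interval_cases p
        · omega
        · exact absurd hp.out (by norm_num)
      · exact h
    have hp1 : (1 : ℝ) < p := by exact_mod_cast hp.out.one_lt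
    have hp0 : (0 : ℝ) < p := lt_trans one_pos hp1
    have hpQ : (p : ℚ) ≠ 0 := by positivity
    have hodd : Odd p := hp.out.odd_of_ne_two (by omega)
    set M := 2 * (p - 1) with hM
    set m := p - 1 with hm
    have hmeven : Even m := by
      rcases hodd with ⟨t, ht⟩
      exact ⟨t - 0, by omega⟩
    have hMeven : Even M := ⟨p - 1, by omega⟩
    have hm4 : 4 ≤ m := by omega
    have hM4 : 4 ≤ M := by omega
    set X : ℚ_[p] := ((bernoulli M - bernoulli m - ((p - 1).factorial + 1 : ℚ) / p : ℚ) : ℚ_[p])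
      with hX
    set TM : ℚ_[p] := ∑ i ∈ range M, ((bernoulli i : ℚ) : ℚ_[p]) * (M.choose i : ℚ_[p])
        * (p : ℚ_[p]) ^ (M + 1 - i) / ((M + 1 - i : ℕ) : ℚ_[p]) with hTM
    set Tm : ℚ_[p] := ∑ i ∈ range m, ((bernoulli i : ℚ) : ℚ_[p]) * (m.choose i : ℚ_[p])
        * (p : ℚ_[p]) ^ (m + 1 - i) / ((m + 1 - i : ℕ) : ℚ_[p]) with hTm
    set A : ℚ_[p] := ((∑ k ∈ range p, k ^ M : ℕ) : ℚ_[p]) - ((∑ k ∈ range p, k ^ m : ℕ) : ℚ_[p])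
        - (((p - 1).factorial : ℕ) + 1 : ℚ_[p]) with hA
    have hqid : (p : ℚ) * (bernoulli M - bernoulli m - ((p - 1).factorial + 1 : ℚ) / p)
        = (p : ℚ) * bernoulli M - (p : ℚ) * bernoulli m - (((p - 1).factorial : ℚ) + 1) := by
      field_simp
    have hpK : (p : ℚ_[p]) ≠ 0 := Nat.cast_ne_zero.mpr hp.out.ne_zero
    have hXc2 : (p : ℚ_[p]) * X = (p : ℚ_[p]) * ((bernoulli M : ℚ) : ℚ_[p])
        - (p : ℚ_[p]) * ((bernoulli m : ℚ) : ℚ_[p]) - (((p - 1).factorial : ℕ) + 1 : ℚ_[p]) := by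
      have hcast := congrArg (fun q : ℚ => (q : ℚ_[p])) hqid
      push_cast at hcast
      rw [hX]
      push_cast
      rw [← hcast]
    have hpx : (p : ℚ_[p]) * X = A - TM + Tm := by
      rw [hA, hTM, hTm]
      linear_combination hXc2 - lehmer_key_expansion (p := p) M + lehmer_key_expansion (p := p) m
    have hnA : ‖A‖ ≤ (p : ℝ) ^ (-2 : ℤ) := by
      have hint := lehmer_int_congruence (p := p) hp3
      have : A = ((∑ k ∈ range p, (k : ℤ) ^ M - ∑ k ∈ range p, (k : ℤ) ^ m
          - (((p - 1).factorial : ℤ) + 1) : ℤ) : ℚ_[p]) := by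
        rw [hA]
        push_cast
        try ring
      rw [this]
      have := (Padic.norm_int_le_pow_iff_dvd
        (∑ k ∈ range p, (k : ℤ) ^ M - ∑ k ∈ range p, (k : ℤ) ^ m
          - (((p - 1).factorial : ℤ) + 1)) 2).mpr (by exact_mod_cast hint)
      convert this using 2
      try norm_num
    have hnTM : ‖TM‖ ≤ (p : ℝ) ^ (-2 : ℤ) := lehmer_norm_tail_le hp5 hMeven hM4
    have hnTm : ‖Tm‖ ≤ (p : ℝ) ^ (-2 : ℤ) := lehmer_norm_tail_le hp5 hmeven hm4
    have hnPX : ‖(p : ℚ_[p]) * X‖ ≤ (p : ℝ) ^ (-2 : ℤ) := by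
      rw [hpx]
      refine le_trans (Padic.nonarchimedean _ _) (max_le ?_ hnTm)
      rw [sub_eq_add_neg]
      refine le_trans (Padic.nonarchimedean _ _) (max_le hnA ?_)
      rwa [norm_neg]
    rw [norm_mul, Padic.norm_p] at hnPX
    have hfin : (p : ℝ) * (p : ℝ) ^ (-2 : ℤ) = (p : ℝ)⁻¹ := by
      rw [show ((p : ℝ)) * (p : ℝ) ^ (-2 : ℤ) = (p : ℝ) ^ (1 + (-2) : ℤ) by
        rw [zpow_add₀ hp0.ne', zpow_one]]
      norm_num
    calc ‖X‖ = (p : ℝ) * ((p : ℝ)⁻¹ * ‖X‖) := by field_simp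
      _ ≤ (p : ℝ) * (p : ℝ) ^ (-2 : ℤ) := mul_le_mul_of_nonneg_left hnPX hp0.le
      _ = (p : ℝ)⁻¹ := hfin
end

section
/- Let p > 3 be prime. Then the sum over a = 1 to p-1 of a^{φ(p²)-1} is divisible by p² (where φ is Euler's totient function). -/
open Finset

/-- If `x ^ 2 = 0` then `(a + x) ^ n = a ^ n + n * a ^ (n-1) * x`. -/
lemma add_pow_of_sq_eq_zero' {R : Type*} [CommRing R] (x a : R) (hx : x ^ 2 = 0)
    (n : ℕ) : (a + x) ^ n = a ^ n + n * a ^ (n - 1) * x := by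
  induction n with
  | zero => simp
  | succ n ih =>
    have hxx : x * x = 0 := by rw [← sq]; exact hx
    rcases Nat.eq_zero_or_pos n with hn | hn
    · subst hn; ring
    · have h1 : a ^ (n - 1) * a = a ^ n := by
        rw [← pow_succ]; congr 1; omega
      have h2 : n + 1 - 1 = n := rfl
      rw [pow_succ, ih, h2]
      calc (a ^ n + n * a ^ (n - 1) * x) * (a + x)
          = a ^ n * a + (n : R) * (a ^ (n - 1) * a) * x + a ^ n * x
            + (n : R) * a ^ (n - 1) * (x * x) := by ring
        _ = a ^ (n + 1) + (↑(n + 1)) * a ^ n * x := by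
            rw [h1, hxx, ← pow_succ]; push_cast; ring

lemma sum_pow_eq_zero_field (K : Type*) [Field K] [Fintype K] [DecidableEq K]
    {i : ℕ} (hi : i ≠ 0) (h : ¬ (Fintype.card K - 1 ∣ i)) : ∑ x : K, x ^ i = 0 := by
  let φ : Kˣ ↪ K := ⟨fun x ↦ x, Units.val_injective⟩
  have huniv : univ.map φ = univ \ {0} := by
    ext x
    simpa only [mem_map, mem_univ, Function.Embedding.coeFn_mk, true_and, mem_sdiff,
      mem_singleton, φ] using show (∃ a : Kˣ, (a : K) = x) ↔ ¬x = 0 from isUnit_iff_ne_zero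
  calc
    ∑ x : K, x ^ i = ∑ x ∈ univ \ {(0 : K)}, x ^ i := by
      rw [← sum_sdiff ({0} : Finset K).subset_univ, sum_singleton, zero_pow hi, add_zero]
    _ = ∑ x : Kˣ, (x ^ i : K) := by simp [φ, ← huniv, univ.sum_map φ]
    _ = 0 := by rw [FiniteField.sum_pow_units K i, if_neg h]

lemma sum_Icc_pow_mod_p (p : ℕ) (hp : p.Prime) {k : ℕ} (hk : k ≠ 0)
    (hdvd : ¬ (p - 1 ∣ k)) : p ∣ ∑ a ∈ Finset.Icc 1 (p - 1), a ^ k := by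
  haveI : Fact p.Prime := ⟨hp⟩
  rw [← ZMod.natCast_eq_zero_iff]
  push_cast
  have hrange : ∑ a ∈ Finset.range p, ((a : ZMod p)) ^ k = ∑ x : ZMod p, x ^ k := by
    refine Finset.sum_nbij' (fun a => ((a : ZMod p))) (fun x => x.val) ?_ ?_ ?_ ?_ ?_
    · intros; exact Finset.mem_univ _
    · intro x _; exact Finset.mem_range.mpr (ZMod.val_lt x)
    · intro a ha; exact ZMod.val_cast_of_lt (Finset.mem_range.mp ha)
    · intro x _; exact ZMod.natCast_rightInverse x
    · intros; rfl
  have hins : Finset.range p = insert 0 (Finset.Icc 1 (p - 1)) := by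
    have hp1 : 1 ≤ p := hp.pos
    ext a
    simp only [Finset.mem_range, Finset.mem_insert, Finset.mem_Icc]
    omega
  have h0 : ((0 : ℕ) : ZMod p) ^ k = 0 := by simp [zero_pow hk]
  have : ∑ a ∈ Finset.Icc 1 (p - 1), ((a : ZMod p)) ^ k = ∑ x : ZMod p, x ^ k := by
    rw [← hrange, hins, Finset.sum_insert (by simp), h0, zero_add]
  rw [this]
  have hcard : Fintype.card (ZMod p) = p := ZMod.card p
  exact sum_pow_eq_zero_field (ZMod p) hk (by rwa [hcard])

/-- For a prime `p > 3`, `p²` divides `∑_{a=1}^{p-1} a^{φ(p²)-1}`,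
where `φ(p²) = p(p-1)`. -/
theorem powerSum_totient_sub_one (p : ℕ) (hp : p.Prime) (hp3 : 3 < p) :
    p ^ 2 ∣ ∑ a ∈ Finset.Icc 1 (p - 1), a ^ (Nat.totient (p ^ 2) - 1) := by
  haveI : Fact p.Prime := ⟨hp⟩
  have hp4 : p ≠ 4 := by rintro rfl; norm_num at hp
  have hp5 : 5 ≤ p := by omega
  set N := Nat.totient (p ^ 2) - 1 with hNdef
  have htot : Nat.totient (p ^ 2) = p * (p - 1) := by
    rw [Nat.totient_prime_pow hp (by norm_num : 0 < 2)]
    norm_num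
  have hN : N = p * (p - 1) - 1 := by rw [hNdef, htot]
  have hodd : Odd p := hp.odd_of_ne_two (by omega)
  have h20 : 20 ≤ p * (p - 1) := by
    calc 20 = 5 * 4 := by norm_num
      _ ≤ p * (p - 1) := Nat.mul_le_mul hp5 (by omega)
  have hEvenM : Even (p * (p - 1)) :=
    Nat.even_mul.mpr (Or.inr (Nat.Odd.sub_odd hodd odd_one))
  have hNodd : Odd N := by
    rw [hN]
    exact Nat.Even.sub_odd (le_trans (by norm_num) h20) hEvenM odd_one
  have hN1even : Even (N - 1) := Nat.Odd.sub_odd hNodd odd_one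
  have hk0 : N - 1 ≠ 0 := by omega
  have hndvd : ¬ (p - 1 ∣ N - 1) := by
    intro h
    have h1 : p - 1 ∣ (p - 1) * p := dvd_mul_right _ _
    have h2 : p - 1 ∣ (p - 1) * p - (N - 1) := Nat.dvd_sub h1 h
    have h3 : (p - 1) * p - (N - 1) = 2 := by
      have : (p - 1) * p = p * (p - 1) := by ring
      omega
    rw [h3] at h2
    have := Nat.le_of_dvd (by norm_num) h2
    omega
  -- divisibility of the inner sum by p
  obtain ⟨m, hm⟩ := sum_Icc_pow_mod_p p hp hk0 hndvd
  -- main computation modulo p^2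
  have hx2 : ((p : ZMod (p ^ 2))) ^ 2 = 0 := by
    rw [← Nat.cast_pow, ZMod.natCast_self]
  have hkey : (p : ℕ) ^ 2 ∣ 2 * ∑ a ∈ Finset.Icc 1 (p - 1), a ^ N := by
    rw [← ZMod.natCast_eq_zero_iff]
    push_cast
    set g : ℕ → ZMod (p ^ 2) := fun a => ((a : ZMod (p ^ 2))) ^ N with hg
    have hrefl : ∑ a ∈ Finset.Icc 1 (p - 1), g a
        = ∑ a ∈ Finset.Icc 1 (p - 1), g (p - a) := by
      refine Finset.sum_nbij' (fun a => p - a) (fun a => p - a) ?_ ?_ ?_ ?_ ?_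
      · intro a ha; simp only [Finset.mem_Icc] at *; omega
      · intro a ha; simp only [Finset.mem_Icc] at *; omega
      · intro a ha; simp only [Finset.mem_Icc] at ha; show p - (p - a) = a; omega
      · intro a ha; simp only [Finset.mem_Icc] at ha; show p - (p - a) = a; omega
      · intro a ha
        simp only [Finset.mem_Icc] at ha
        have : p - (p - a) = a := by omega
        rw [this]
    have hdouble : (2 : ZMod (p ^ 2)) * ∑ a ∈ Finset.Icc 1 (p - 1), g a
        = ∑ a ∈ Finset.Icc 1 (p - 1), (g a + g (p - a)) := by
      rw [Finset.sum_add_distrib, ← hrefl]; ring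
    have hpt : ∀ a ∈ Finset.Icc 1 (p - 1),
        g a + g (p - a) = ((a : ZMod (p ^ 2))) ^ (N - 1) * ((N : ZMod (p ^ 2)) * p) := by
      intro a ha
      simp only [Finset.mem_Icc] at ha
      have hap : a ≤ p := by omega
      have hcast : ((p - a : ℕ) : ZMod (p ^ 2)) = (p : ZMod (p ^ 2)) - a := by
        push_cast [Nat.cast_sub hap]; ring
      have hexp : ((p : ZMod (p ^ 2)) - a) ^ N
          = (-(a : ZMod (p ^ 2))) ^ N + N * (-(a : ZMod (p ^ 2))) ^ (N - 1) * p := by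
        have := add_pow_of_sq_eq_zero' (p : ZMod (p ^ 2)) (-(a : ZMod (p ^ 2))) hx2 N
        rw [← this]; ring_nf
      rw [hg]
      simp only [hcast, hexp, hNodd.neg_pow, hN1even.neg_pow]
      ring
    rw [hdouble, Finset.sum_congr rfl hpt, ← Finset.sum_mul]
    have hsum : ∑ a ∈ Finset.Icc 1 (p - 1), ((a : ZMod (p ^ 2))) ^ (N - 1)
        = ((∑ a ∈ Finset.Icc 1 (p - 1), a ^ (N - 1) : ℕ) : ZMod (p ^ 2)) := by
      push_cast; rfl
    rw [hsum, hm]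
    push_cast
    have : ((p : ZMod (p ^ 2)) * m) * ((N : ZMod (p ^ 2)) * p)
        = (m : ZMod (p ^ 2)) * N * ((p : ZMod (p ^ 2)) ^ 2) := by ring
    rw [this, hx2, mul_zero]
  -- remove the factor 2
  have hco : Nat.Coprime (p ^ 2) 2 :=
    Nat.Coprime.pow_left _ (hodd.coprime_two_right)
  exact (Nat.Coprime.dvd_of_dvd_mul_left hco hkey)
end

section
/- Let p > 3 be prime and let 3 ≤ k < p(p-1) be odd. Then (1/p)·Σ_{a=1}^{p-1} a^k ≡ (pk/2)·B_{k-1} (mod p²) as rational numbers. -/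
open Finset

lemma aux_choose_id (m i : ℕ) : (m+1).choose i * (m+1-i) = (m+1) * m.choose i := by
  rw [← Nat.choose_succ_right_eq]
  exact (Nat.add_one_mul_choose_eq m i).symm

lemma aux_faulhaber (n m : ℕ) : ∑ a ∈ range n, (a:ℚ)^m =
    ∑ i ∈ range (m+1), bernoulli i * (m.choose i) * (n:ℚ)^(m+1-i) / ((m+1-i : ℕ) : ℚ) := by
  rw [sum_range_pow]
  refine Finset.sum_congr rfl fun i hi => ?_
  have hi' : i ≤ m := Nat.lt_succ_iff.mp (Finset.mem_range.mp hi)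
  have h1 : ((m+1-i : ℕ):ℚ) ≠ 0 := Nat.cast_ne_zero.mpr (by omega)
  have h2 : ((m:ℚ)+1) ≠ 0 := by positivity
  have hc : ((m+1).choose i : ℚ) * ((m+1-i : ℕ):ℚ) = ((m:ℚ)+1) * (m.choose i : ℚ) := by
    exact_mod_cast congrArg (Nat.cast : ℕ → ℚ) (aux_choose_id m i)
  rw [div_eq_div_iff h2 h1]
  linear_combination (bernoulli i * (n:ℚ)^(m+1-i)) * hc

lemma aux_norm_natCast_le_one (p : ℕ) [Fact p.Prime] (n : ℕ) : ‖(n : ℚ_[p])‖ ≤ 1 := by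
  have := Padic.norm_int_le_one (p := p) (n : ℤ)
  push_cast at this
  exact this

lemma aux_norm_natCast_ge (p : ℕ) [Fact p.Prime] (j v : ℕ) (hj : j ≠ 0)
    (h : ¬ p^(v+1) ∣ j) : (p:ℝ)^(-(v:ℤ)) ≤ ‖(j : ℚ_[p])‖ := by
  have hval : padicValNat p j ≤ v := by
    by_contra hh
    push_neg at hh
    exact h ((padicValNat_dvd_iff_le hj).mpr hh)
  have h1 : (1:ℝ) ≤ (p:ℝ) := by exact_mod_cast (Fact.out : p.Prime).one_lt.le
  have hcast : ((j : ℚ_[p])) = (((j:ℚ) : ℚ_[p])) := by norm_cast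
  have hv : padicValRat p ((j:ℕ):ℚ) = padicValNat p j := padicValRat.of_nat
  rw [hcast, Padic.eq_padicNorm,
    padicNorm.eq_zpow_of_nonzero (by exact_mod_cast hj), hv]
  push_cast
  exact zpow_le_zpow_right₀ h1 (by omega)

lemma aux_term (p : ℕ) [Fact p.Prime] (b : ℚ) (c t j : ℕ) (B J E : ℤ)
    (hb : ‖(b : ℚ_[p])‖ ≤ (p:ℝ)^B) (hJ : (p:ℝ)^(-J) ≤ ‖(j : ℚ_[p])‖)
    (hle : B - (t:ℤ) + J ≤ E) :
    ‖(b : ℚ_[p]) * (c : ℚ_[p]) * (p : ℚ_[p])^t / (j : ℚ_[p])‖ ≤ (p:ℝ)^E := by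
  have hp0 : (0:ℝ) < p := by exact_mod_cast (Fact.out : p.Prime).pos
  have hp0' : (p:ℝ) ≠ 0 := ne_of_gt hp0
  have h1 : (1:ℝ) ≤ (p:ℝ) := by exact_mod_cast (Fact.out : p.Prime).one_lt.le
  have e1 : ‖(p : ℚ_[p])^t‖ = (p:ℝ)^(-(t:ℤ)) := by
    rw [norm_pow, Padic.norm_p, inv_pow, ← zpow_natCast, ← zpow_neg]
  rw [norm_div, norm_mul, norm_mul, e1]
  calc ‖(b : ℚ_[p])‖ * ‖(c : ℚ_[p])‖ * (p:ℝ)^(-(t:ℤ)) / ‖(j : ℚ_[p])‖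
      ≤ (p:ℝ)^B * 1 * (p:ℝ)^(-(t:ℤ)) / (p:ℝ)^(-J) := by
        apply div_le_div₀ (by positivity) ?_ (zpow_pos hp0 _) hJ
        gcongr
        exact aux_norm_natCast_le_one p c
    _ = (p:ℝ)^(B - (t:ℤ) + J) := by
        rw [mul_one, ← zpow_add₀ hp0', ← zpow_sub₀ hp0']
        congr 1
        ring
    _ ≤ (p:ℝ)^E := zpow_le_zpow_right₀ h1 hle

lemma aux_bern (p : ℕ) [Fact p.Prime] : ∀ m : ℕ, ‖((bernoulli m : ℚ) : ℚ_[p])‖ ≤ (p:ℝ)^(1:ℤ) := by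
  intro m
  induction m using Nat.strong_induction_on with
  | _ m ih =>
    have hp0 : (0:ℝ) < p := by exact_mod_cast (Fact.out : p.Prime).pos
    have hkey : (p:ℚ) * bernoulli m = (∑ a ∈ range p, (a:ℚ)^m)
        - ∑ i ∈ range m, bernoulli i * (m.choose i) * (p:ℚ)^(m+1-i) / ((m+1-i : ℕ):ℚ) := by
      have hf := aux_faulhaber p m
      rw [Finset.sum_range_succ, show m+1-m = 1 by omega, Nat.choose_self] at hf
      simp only [Nat.cast_one, pow_one, div_one, mul_one, Nat.choose_self] at hf
      linarith [hf]
    have h2 : ‖(((p:ℚ) * bernoulli m : ℚ) : ℚ_[p])‖ ≤ 1 := by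
      rw [hkey]
      push_cast
      rw [sub_eq_add_neg]
      refine le_trans (Padic.nonarchimedean _ _) (max_le ?_ ?_)
      · have hcast : (∑ a ∈ range p, ((a:ℚ_[p]))^m) = ((∑ a ∈ range p, a^m : ℕ) : ℚ_[p]) := by
          push_cast; rfl
        rw [hcast]
        exact aux_norm_natCast_le_one p _
      · rw [norm_neg]
        refine IsUltrametricDist.norm_sum_le_of_forall_le_of_nonneg (by norm_num) fun i hi => ?_
        have him : i < m := Finset.mem_range.mp hi
        have hdvd : ¬ p^((m-i)+1) ∣ (m+1-i) := by
          intro hdvd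
          have h1 := Nat.le_of_dvd (by omega) hdvd
          have h2 := Nat.lt_pow_self (n := (m-i)+1) (Fact.out : p.Prime).one_lt
          omega
        have hJ := aux_norm_natCast_ge p (m+1-i) (m-i) (by omega) hdvd
        have := aux_term p (bernoulli i) (m.choose i) (m+1-i) (m+1-i) 1 ((m-i:ℕ):ℤ) 0
          (ih i him) (by exact_mod_cast hJ) (by omega)
        simpa using this
    have h3 : (((p:ℚ) * bernoulli m : ℚ) : ℚ_[p]) = (p:ℚ_[p]) * ((bernoulli m : ℚ) : ℚ_[p]) := by
      push_cast; ring
    rw [h3, norm_mul, Padic.norm_p] at h2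
    have h4 := mul_le_mul_of_nonneg_left h2 (le_of_lt hp0)
    rw [← mul_assoc, mul_inv_cancel₀ (ne_of_gt hp0), one_mul, mul_one] at h4
    rw [zpow_one]
    exact h4

/-- Lemma (power sums, odd case): for a prime `p > 3` and odd `3 ≤ k < p(p-1)`,
`(1/p)·∑_{a=1}^{p-1} a^k ≡ (pk/2)·B_{k-1} (mod p²)` as rational numbers, the
congruence meaning the difference has `p`-adic norm at most `p⁻²`. -/
theorem powerSum_bernoulli_case_c (p : ℕ) [hp : Fact p.Prime] (hp3 : 3 < p)
    (k : ℕ) (hk3 : 3 ≤ k) (hklt : k < p * (p - 1)) (hodd : Odd k) :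
    ‖(((1 / p) * ∑ a ∈ Finset.Icc 1 (p - 1), (a : ℚ) ^ k
        - (p * k / 2) * bernoulli (k - 1) : ℚ) : ℚ_[p])‖
      ≤ (p : ℝ) ^ (-2 : ℤ) := by
  have hpp : p.Prime := Fact.out
  have hp5 : 5 ≤ p := by
    rcases Nat.lt_or_ge p 5 with h | h
    · interval_cases p
      · exact absurd hpp (by decide)
    · exact h
  have hpq : (p:ℚ) ≠ 0 := Nat.cast_ne_zero.mpr hpp.pos.ne'
  have hb0 : bernoulli k = 0 := by
    rw [bernoulli_eq_bernoulli'_of_ne_one (by omega)]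
    exact bernoulli'_eq_zero_of_odd hodd (by omega)
  have hck : k.choose (k-1) = k :=
    (Nat.choose_symm (show 1 ≤ k by omega)).trans (Nat.choose_one_right k)
  -- step 1: Icc sum = range sum
  have hS : ∑ a ∈ Finset.Icc 1 (p-1), (a:ℚ)^k = ∑ a ∈ range p, (a:ℚ)^k := by
    have h1 : Finset.Icc 1 (p-1) = Finset.Ico 1 p := by
      rw [← Finset.Ico_add_one_right_eq_Icc]; congr 1; omega
    have h2 := Finset.sum_Ico_consecutive (f := fun a : ℕ => (a:ℚ)^k)
      (Nat.zero_le 1) (show 1 ≤ p by omega)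
    have h3 : ∑ a ∈ Finset.Ico 0 1, ((a:ℕ):ℚ)^k = 0 := by
      simp [zero_pow (show k ≠ 0 by omega)]
    rw [h1, Finset.range_eq_Ico, ← h2, h3, zero_add]
  -- step 2: (1/p) * range sum
  have hsum : (1/(p:ℚ)) * ∑ a ∈ range p, (a:ℚ)^k
      = ∑ i ∈ range (k+1), bernoulli i * (k.choose i) * (p:ℚ)^(k-i) / ((k+1-i : ℕ):ℚ) := by
    rw [aux_faulhaber, Finset.mul_sum]
    refine Finset.sum_congr rfl fun i hi => ?_
    have hik : i ≤ k := Nat.lt_succ_iff.mp (Finset.mem_range.mp hi)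
    have hpow : (p:ℚ)^(k+1-i) = (p:ℚ)^(k-i) * p := by
      rw [← pow_succ]; congr 1; omega
    rw [hpow]
    have hcancel : (p:ℚ) * (1/(p:ℚ)) = 1 := mul_one_div_cancel hpq
    linear_combination (bernoulli i * ((k.choose i):ℚ) * (p:ℚ)^(k-i) / ((k+1-i:ℕ):ℚ)) * hcancel
  -- step 3: rational identity
  have hmain : (1/(p:ℚ)) * ∑ a ∈ Finset.Icc 1 (p-1), (a:ℚ)^k - ((p:ℚ)*k/2) * bernoulli (k-1)
      = ∑ i ∈ range (k-1), bernoulli i * (k.choose i) * (p:ℚ)^(k-i) / ((k+1-i : ℕ):ℚ) := by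
    rw [hS, hsum, show k+1 = (k-1)+1+1 by omega, Finset.sum_range_succ, Finset.sum_range_succ,
      show k-1+1 = k by omega]
    rw [hb0]
    have hterm : bernoulli (k-1) * ((k.choose (k-1)):ℚ) * (p:ℚ)^(k-(k-1)) / ((k+1-(k-1) : ℕ):ℚ)
        = ((p:ℚ)*k/2) * bernoulli (k-1) := by
      rw [hck, show k-(k-1) = 1 by omega, show k+1-(k-1) = 2 by omega]
      push_cast
      ring
    rw [hterm]
    ring
  rw [hmain]
  push_cast
  refine IsUltrametricDist.norm_sum_le_of_forall_le_of_nonneg (by positivity) fun i hi => ?_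
  have hik : i < k - 1 := Finset.mem_range.mp hi
  by_cases hi2 : i = k-2
  · by_cases hk3' : k = 3
    · subst hk3'
      have hi1 : i = 1 := by omega
      subst hi1
      refine aux_term p (bernoulli 1) (Nat.choose 3 1) (3-1) (3+1-1) 0 0 (-2) ?_ ?_ (by omega)
      · rw [bernoulli_one, zpow_zero]
        have h2 : (((-1)/2 : ℚ) : ℚ_[p]) = -1 / ((2:ℕ) : ℚ_[p]) := by push_cast; ring
        rw [h2, norm_div, norm_neg, norm_one]
        have hg : (1:ℝ) ≤ ‖((2:ℕ) : ℚ_[p])‖ := by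
          have := aux_norm_natCast_ge p 2 0 (by omega)
            (by intro h; have := Nat.le_of_dvd (by omega) (pow_one p ▸ h); omega)
          simpa using this
        exact div_le_one_of_le₀ hg (norm_nonneg _)
      · refine aux_norm_natCast_ge p (3+1-1) 0 (by omega) ?_
        intro h
        have := Nat.le_of_dvd (by omega) (pow_one p ▸ h)
        omega
    · -- i = k-2 odd ≥ 3, bernoulli i = 0
      have hoddi : Odd i := by
        obtain ⟨n, hn⟩ := hodd
        exact ⟨n-1, by omega⟩
      have hbi : bernoulli i = 0 := by
        rw [bernoulli_eq_bernoulli'_of_ne_one (by omega)]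
        exact bernoulli'_eq_zero_of_odd hoddi (by omega)
      rw [hbi]
      simp only [Rat.cast_zero, zero_mul, zero_div, norm_zero]
      positivity
  · by_cases hi3 : i = k-3
    · refine aux_term p (bernoulli i) (k.choose i) (k-i) (k+1-i) 1 0 (-2)
        (aux_bern p i) ?_ (by omega)
      have h4 : ¬ p^(0+1) ∣ (k+1-i) := by
        rw [show k+1-i = 4 by omega]
        intro h
        have h5 := Nat.le_of_dvd (by omega) h
        have h5' : p ≤ 4 := by calc p = p^(0+1) := by ring
                                 _ ≤ 4 := h5
        omega
      exact aux_norm_natCast_ge p (k+1-i) 0 (by omega) h4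
    · refine aux_term p (bernoulli i) (k.choose i) (k-i) (k+1-i) 1 1 (-2)
        (aux_bern p i) ?_ (by omega)
      have h4 : ¬ p^(1+1) ∣ (k+1-i) := by
        intro h
        have h5 : p*p ≤ k+1-i := by
          have := Nat.le_of_dvd (by omega) h
          calc p*p = p^(1+1) := by ring
            _ ≤ k+1-i := this
        have hp1 : p - 1 + 1 = p := by omega
        have hPQ : p*(p-1) + p = p*p := by
          calc p*(p-1) + p = p*((p-1)+1) := by ring
            _ = p*p := by rw [hp1]
        have h7 : k+1-i ≤ k+1 := Nat.sub_le _ _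
        linarith [hklt, hp5]
      exact aux_norm_natCast_ge p (k+1-i) 1 (by omega) h4
end

section
/- Let p > 3 be prime and let 3 ≤ k < p(p-1) be even with (p-1) ∤ k. Then (1/p)·Σ_{a=1}^{p-1} a^k ≡ B_k + (p²k(k-1)/6)·B_{k-2} (mod p²) as rational numbers. -/
open Finset

section PSBAux
variable (p : ℕ) [hp : Fact p.Prime]

private lemma psb_ultra {C : ℝ} (hC : 0 ≤ C)
    (s : Finset ℕ) (f : ℕ → ℚ_[p]) (h : ∀ i ∈ s, ‖f i‖ ≤ C) :
    ‖∑ i ∈ s, f i‖ ≤ C := by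
  classical
  induction s using Finset.cons_induction with
  | empty => simpa using hC
  | cons a s ha ih =>
    rw [Finset.sum_cons]
    exact le_trans (Padic.nonarchimedean _ _)
      (max_le (h a (Finset.mem_cons_self a s))
        (ih fun i hi => h i (Finset.mem_cons_of_mem hi)))

private lemma psb_norm_nat_eq {m : ℕ} (hm : m ≠ 0) :
    ‖((m : ℚ) : ℚ_[p])‖ = (p : ℝ) ^ (-(padicValNat p m : ℤ)) := by
  rw [Padic.eq_padicNorm,
    padicNorm.eq_zpow_of_nonzero (by exact_mod_cast hm), ← padicValRat_of_nat]
  push_cast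
  norm_cast

omit hp in
private lemma psb_val_le {m v : ℕ} (hm : m ≠ 0)
    (hlt : m < p ^ (v + 1)) : padicValNat p m ≤ v := by
  by_contra hcon
  push_neg at hcon
  have h1 : p ^ (v + 1) ∣ m := dvd_trans (pow_dvd_pow p hcon) pow_padicValNat_dvd
  exact absurd (Nat.le_of_dvd (Nat.pos_of_ne_zero hm) h1) (not_le.mpr hlt)

private lemma psb_norm_nat_le (c : ℕ) :
    ‖((c : ℚ) : ℚ_[p])‖ ≤ 1 := by
  simpa using Padic.norm_int_le_one (p := p) (c : ℤ)

private lemma psb_term_norm (b : ℚ) (c e m : ℕ)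
    (w v t : ℤ) (hb : ‖(b : ℚ_[p])‖ ≤ (p : ℝ) ^ w) (hm : m ≠ 0)
    (hv : (padicValNat p m : ℤ) ≤ v) (ht : w + v - (e : ℤ) ≤ t) :
    ‖((b * (c : ℚ) * (p : ℚ) ^ e / (m : ℚ) : ℚ) : ℚ_[p])‖ ≤ (p : ℝ) ^ t := by
  have hp1 : (1 : ℝ) < p := by exact_mod_cast hp.out.one_lt
  have hp0 : (0 : ℝ) < p := by linarith
  have hcast : ((b * (c : ℚ) * (p : ℚ) ^ e / (m : ℚ) : ℚ) : ℚ_[p])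
      = (b : ℚ_[p]) * (((c : ℚ) : ℚ_[p])) * (((p : ℚ) : ℚ_[p])) ^ e / (((m : ℚ) : ℚ_[p])) := by
    push_cast; ring
  rw [hcast, norm_div, norm_mul, norm_mul, norm_pow, psb_norm_nat_eq p hm]
  have hpq : (((p : ℚ) : ℚ_[p])) = (p : ℚ_[p]) := by push_cast; rfl
  rw [hpq, Padic.norm_p, div_eq_mul_inv, ← zpow_neg, neg_neg]
  have h1 : ‖(b : ℚ_[p])‖ * ‖((c : ℚ) : ℚ_[p])‖ * ((p:ℝ)⁻¹) ^ e * (p:ℝ) ^ (padicValNat p m : ℤ)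
      ≤ (p:ℝ) ^ w * 1 * ((p:ℝ)⁻¹) ^ e * (p:ℝ) ^ v := by
    gcongr
    · exact psb_norm_nat_le p c
    · exact hp1.le
  refine h1.trans ?_
  have h2 : ((p:ℝ)⁻¹) ^ e = (p:ℝ) ^ (-(e:ℤ)) := by
    rw [inv_pow, ← zpow_natCast, ← zpow_neg]
  rw [h2, mul_one, ← zpow_add₀ hp0.ne', ← zpow_add₀ hp0.ne']
  exact zpow_le_zpow_right₀ hp1.le (by omega)

omit hp in
private lemma psb_haux (n i : ℕ) (hi : i ≤ n) :
    (((n + 1).choose i : ℕ) : ℚ) / ((n : ℚ) + 1)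
      = ((n.choose i : ℕ) : ℚ) / ((n + 1 - i : ℕ) : ℚ) := by
  have h1 := Nat.add_one_mul_choose_eq n (n - i)
  rw [Nat.choose_symm hi, show n - i + 1 = n + 1 - i by omega,
    Nat.choose_symm (show i ≤ n + 1 by omega)] at h1
  have hd1 : ((n : ℚ) + 1) ≠ 0 := by positivity
  have hd2 : ((n + 1 - i : ℕ) : ℚ) ≠ 0 := Nat.cast_ne_zero.mpr (by omega)
  rw [div_eq_div_iff hd1 hd2]
  have : ((n + 1 : ℕ) : ℚ) * (n.choose i : ℚ) = ((n+1).choose i : ℚ) * ((n + 1 - i : ℕ) : ℚ) := by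
    exact_mod_cast congrArg (Nat.cast : ℕ → ℚ) h1
  push_cast at this ⊢
  linarith

omit hp in
private lemma psb_sum_eq (n : ℕ) :
    (∑ a ∈ range p, (a : ℚ) ^ n) =
      ∑ i ∈ range (n + 1),
        bernoulli i * (n.choose i : ℚ) * (p : ℚ) ^ (n + 1 - i) / ((n + 1 - i : ℕ) : ℚ) := by
  rw [sum_range_pow]
  refine Finset.sum_congr rfl fun i hi => ?_
  have hi' : i ≤ n := by simpa [Nat.lt_succ_iff] using Finset.mem_range.mp hi
  calc bernoulli i * ((n + 1).choose i : ℚ) * (p : ℚ) ^ (n + 1 - i) / ((n : ℚ) + 1)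
      = bernoulli i * (p : ℚ) ^ (n + 1 - i) * ((((n + 1).choose i : ℕ) : ℚ) / ((n : ℚ) + 1)) := by
        ring
    _ = bernoulli i * (p : ℚ) ^ (n + 1 - i) * (((n.choose i : ℕ) : ℚ) / ((n + 1 - i : ℕ) : ℚ)) := by
        rw [psb_haux n i hi']
    _ = bernoulli i * (n.choose i : ℚ) * (p : ℚ) ^ (n + 1 - i) / ((n + 1 - i : ℕ) : ℚ) := by
        ring

private lemma psb_bernoulli_norm : ∀ n : ℕ, ‖((bernoulli n : ℚ) : ℚ_[p])‖ ≤ (p : ℝ) ^ (1 : ℤ) := by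
  intro n
  induction n using Nat.strong_induction_on with
  | _ n ih =>
  have hp1 : (1 : ℝ) < p := by exact_mod_cast hp.out.one_lt
  have hp0 : (0 : ℝ) < p := by linarith
  have hEq := psb_sum_eq p n
  rw [Finset.sum_range_succ] at hEq
  rw [show n + 1 - n = 1 by omega, Nat.choose_self] at hEq
  have hpb : (p : ℚ) * bernoulli n
      = (∑ a ∈ range p, (a : ℚ) ^ n)
        - ∑ i ∈ range n, bernoulli i * (n.choose i : ℚ) * (p : ℚ) ^ (n + 1 - i)
            / ((n + 1 - i : ℕ) : ℚ) := by
    rw [hEq]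
    push_cast
    ring
  have hS : ‖((∑ a ∈ range p, (a : ℚ) ^ n : ℚ) : ℚ_[p])‖ ≤ 1 := by
    have : (∑ a ∈ range p, (a : ℚ) ^ n) = ((∑ a ∈ range p, a ^ n : ℕ) : ℚ) := by push_cast; ring
    rw [this]
    exact psb_norm_nat_le p _
  have hT : ‖((∑ i ∈ range n, bernoulli i * (n.choose i : ℚ) * (p : ℚ) ^ (n + 1 - i)
      / ((n + 1 - i : ℕ) : ℚ) : ℚ) : ℚ_[p])‖ ≤ 1 := by
    rw [Rat.cast_sum]
    refine psb_ultra p zero_le_one _ _ fun i hi => ?_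
    have hi' : i < n := Finset.mem_range.mp hi
    have hval : padicValNat p (n + 1 - i) ≤ n - i := by
      refine psb_val_le p (by omega) ?_
      calc n + 1 - i < 2 ^ (n + 1 - i) := Nat.lt_two_pow_self
        _ ≤ p ^ (n + 1 - i) := Nat.pow_le_pow_left hp.out.two_le _
        _ = p ^ ((n - i) + 1) := by congr 1; omega
    have := psb_term_norm p (bernoulli i) (n.choose i) (n + 1 - i) (n + 1 - i) 1 ((n - i : ℕ)) 0
      (ih i hi') (by omega) (by exact_mod_cast hval) (by omega)
    simpa using this
  have hmax : ‖(((p : ℚ) * bernoulli n : ℚ) : ℚ_[p])‖ ≤ 1 := by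
    rw [hpb]
    push_cast [sub_eq_add_neg]
    refine le_trans (Padic.nonarchimedean _ _) (max_le ?_ ?_)
    · exact_mod_cast hS
    · rw [norm_neg]; exact_mod_cast hT
  have hsplit : ‖(((p : ℚ) * bernoulli n : ℚ) : ℚ_[p])‖
      = (p : ℝ)⁻¹ * ‖((bernoulli n : ℚ) : ℚ_[p])‖ := by
    push_cast
    rw [norm_mul]
    congr 1
    exact_mod_cast Padic.norm_p (p := p)
  rw [hsplit] at hmax
  rw [zpow_one]
  calc ‖((bernoulli n : ℚ) : ℚ_[p])‖ = (p:ℝ) * ((p:ℝ)⁻¹ * ‖((bernoulli n : ℚ) : ℚ_[p])‖) := by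
        field_simp
    _ ≤ (p:ℝ) * 1 := mul_le_mul_of_nonneg_left hmax hp0.le
    _ = (p:ℝ) := mul_one _

end PSBAux

/-- Lemma (power sums, even case with `(p-1) ∤ k`): for a prime `p > 3` and even
`3 ≤ k < p(p-1)` with `(p-1) ∤ k`,
`(1/p)·∑_{a=1}^{p-1} a^k ≡ B_k + (p²k(k-1)/6)·B_{k-2} (mod p²)` as rational
numbers, the congruence meaning the difference has `p`-adic norm at most `p⁻²`. -/
theorem powerSum_bernoulli_case_b (p : ℕ) [hp : Fact p.Prime] (hp3 : 3 < p)
    (k : ℕ) (hk3 : 3 ≤ k) (hklt : k < p * (p - 1)) (heven : Even k)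
    (hndvd : ¬ (p - 1) ∣ k) :
    ‖(((1 / p) * ∑ a ∈ Finset.Icc 1 (p - 1), (a : ℚ) ^ k
        - (bernoulli k + ((p : ℚ) ^ 2 * k * (k - 1) / 6) * bernoulli (k - 2)) : ℚ) : ℚ_[p])‖
      ≤ (p : ℝ) ^ (-2 : ℤ) := by
  have hp1 : (1 : ℝ) < p := by exact_mod_cast hp.out.one_lt
  have hpq0 : (p : ℚ) ≠ 0 := Nat.cast_ne_zero.mpr hp.out.ne_zero
  obtain ⟨m, rfl⟩ : ∃ m, k = m + 4 := ⟨k - 4, by obtain ⟨r, hr⟩ := heven; omega⟩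
  have hmeven : m % 2 = 0 := by obtain ⟨r, hr⟩ := heven; omega
  have hppsq : p * (p - 1) + p = p * p := by rw [← Nat.mul_succ]; congr 1; omega
  have hsq : p ^ 2 = p * p := sq p
  -- the denominator bound : any d ≤ m+5 has padicValNat ≤ 1
  have hdenval : ∀ d : ℕ, d ≠ 0 → d ≤ m + 5 → (padicValNat p d : ℤ) ≤ 1 := by
    intro d hd0 hdle
    have hpp2 : p ^ (1 + 1) = p * p := by ring
    have : padicValNat p d ≤ 1 := psb_val_le p hd0 (by omega)
    exact_mod_cast this
  -- step 1 : Icc to range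
  have hIcc : ∑ a ∈ Finset.Icc 1 (p - 1), (a : ℚ) ^ (m + 4) = ∑ a ∈ range p, (a : ℚ) ^ (m + 4) := by
    have h0 : Finset.Icc 1 (p - 1) = Finset.Ico 1 p := by
      rw [← Finset.Ico_add_one_right_eq_Icc]; congr 1; omega
    rw [h0, Finset.range_eq_Ico, Finset.sum_eq_sum_Ico_succ_bot (show 0 < p by omega)]
    simp
  -- step 2 : divided Faulhaber
  have hdiv : (1 / (p : ℚ)) * ∑ a ∈ range p, (a : ℚ) ^ (m + 4)
      = ∑ i ∈ range (m + 4 + 1),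
          bernoulli i * ((m + 4).choose i : ℚ) * (p : ℚ) ^ (m + 4 - i)
            / ((m + 4 + 1 - i : ℕ) : ℚ) := by
    rw [psb_sum_eq p (m + 4), Finset.mul_sum]
    refine Finset.sum_congr rfl fun i hi => ?_
    have hi' : i ≤ m + 4 := by
      have := Finset.mem_range.mp hi; omega
    have hpow : (p : ℚ) ^ (m + 4 + 1 - i) = (p : ℚ) * (p : ℚ) ^ (m + 4 - i) := by
      rw [← pow_succ']; congr 1; omega
    rw [hpow]
    calc (1 / (p : ℚ)) * (bernoulli i * ((m + 4).choose i : ℚ)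
          * ((p : ℚ) * (p : ℚ) ^ (m + 4 - i)) / ((m + 4 + 1 - i : ℕ) : ℚ))
        = (bernoulli i * ((m + 4).choose i : ℚ) * (p : ℚ) ^ (m + 4 - i)
            / ((m + 4 + 1 - i : ℕ) : ℚ)) * ((p : ℚ) * ((p : ℚ))⁻¹) := by ring
      _ = bernoulli i * ((m + 4).choose i : ℚ) * (p : ℚ) ^ (m + 4 - i)
            / ((m + 4 + 1 - i : ℕ) : ℚ) := by rw [mul_inv_cancel₀ hpq0, mul_one]
  -- step 3 : odd bernoulli vanishes
  have hodd : bernoulli (m + 3) = 0 := by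
    rw [bernoulli_eq_bernoulli'_of_ne_one (by omega)]
    exact bernoulli'_eq_zero_of_odd ⟨m / 2 + 1, by omega⟩ (by omega)
  have hch2 : (((m + 4).choose (m + 2) : ℕ) : ℚ)
      = ((m + 4 : ℕ) : ℚ) * (((m + 4 : ℕ) : ℚ) - 1) / 2 := by
    rw [show m + 2 = m + 4 - 2 by omega, Nat.choose_symm (by omega), Nat.cast_choose_two]
  -- the key rational identity
  have key : (1 / (p : ℚ)) * ∑ a ∈ Finset.Icc 1 (p - 1), (a : ℚ) ^ (m + 4)
      - (bernoulli (m + 4)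
        + ((p : ℚ) ^ 2 * ((m + 4 : ℕ) : ℚ) * (((m + 4 : ℕ) : ℚ) - 1) / 6) * bernoulli (m + 4 - 2))
      = ∑ i ∈ range (m + 2),
          bernoulli i * ((m + 4).choose i : ℚ) * (p : ℚ) ^ (m + 4 - i)
            / ((m + 4 + 1 - i : ℕ) : ℚ) := by
    rw [hIcc, hdiv, Finset.sum_range_succ, Finset.sum_range_succ, Finset.sum_range_succ]
    rw [show m + 4 - (m + 4) = 0 by omega, show m + 4 + 1 - (m + 4) = 1 by omega,
      show m + 4 - (m + 3) = 1 by omega, show m + 4 + 1 - (m + 3) = 2 by omega,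
      show m + 4 - (m + 2) = 2 by omega, show m + 4 + 1 - (m + 2) = 3 by omega,
      show m + 4 - 2 = m + 2 by omega, hodd, Nat.choose_self, hch2]
    push_cast
    ring
  rw [key, Rat.cast_sum]
  refine psb_ultra p (by positivity) _ _ fun i hi => ?_
  have hi' : i < m + 2 := Finset.mem_range.mp hi
  rcases Nat.even_or_odd i with hie | hio
  · -- even index : use ‖B_i‖ ≤ p, k - i ≥ 4
    have hie' : i % 2 = 0 := by obtain ⟨r, hr⟩ := hie; omega
    refine psb_term_norm p (bernoulli i) ((m + 4).choose i) (m + 4 - i) (m + 4 + 1 - i)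
      1 1 (-2) (psb_bernoulli_norm p i) (by omega) (hdenval _ (by omega) (by omega)) (by omega)
  · rcases Nat.eq_or_lt_of_le hio.pos with h1 | h3
    · -- i = 1
      have hb1 : ‖((bernoulli 1 : ℚ) : ℚ_[p])‖ ≤ (p : ℝ) ^ (0 : ℤ) := by
        rw [bernoulli_one, zpow_zero]
        have hcast : ((-1 / 2 : ℚ) : ℚ_[p]) = -((((2 : ℕ) : ℚ)) : ℚ_[p])⁻¹ := by
          push_cast; ring
        rw [hcast, norm_neg, norm_inv, psb_norm_nat_eq p (by norm_num)]
        have hval2 : padicValNat p 2 = 0 :=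
          padicValNat.eq_zero_of_not_dvd (by
            intro h; exact absurd (Nat.le_of_dvd (by norm_num) h) (by omega))
        simp [hval2]
      obtain rfl : i = 1 := h1.symm
      refine psb_term_norm p (bernoulli 1) ((m + 4).choose 1) (m + 4 - 1) (m + 4 + 1 - 1)
        0 1 (-2) hb1 (by omega) (hdenval _ (by omega) (by omega)) (by omega)
    · -- odd i ≥ 3 : bernoulli i = 0
      have hbz : bernoulli i = 0 := by
        rw [bernoulli_eq_bernoulli'_of_ne_one (by omega)]
        exact bernoulli'_eq_zero_of_odd hio (by omega)
      rw [hbz]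
      simp only [zero_mul, zero_div, Rat.cast_zero, norm_zero]
      positivity
end

section
/- Let p > 3 be a prime and let W_p = ((p-1)! + 1)/p. If p² divides W_p viewed p-adically (i.e., v_p(W_p) ≥ 2), then 4(B_{p-1} - R) ≡ B_{2(p-1)} - R (mod p²), where R = 1 - 1/p; i.e., v_p(4B_{p-1} - B_{2(p-1)} - 3R) ≥ 2. -/
open Finset

set_option maxHeartbeats 1000000

namespace SuperWilson

variable (p : ℕ) [hp : Fact p.Prime]

lemma nat_norm_le_one (n : ℕ) : ‖(n : ℚ_[p])‖ ≤ 1 := by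
  exact_mod_cast Padic.norm_int_le_one (p := p) (n : ℤ)

lemma nat_norm_eq_one {n : ℕ} (h : ¬ p ∣ n) : ‖(n : ℚ_[p])‖ = 1 := by
  have h1 : ‖((n:ℤ) : ℚ_[p])‖ ≤ 1 := Padic.norm_int_le_one (p := p) _
  have h2 : ¬ ‖((n:ℤ) : ℚ_[p])‖ < 1 := by
    rw [Padic.norm_intCast_lt_one_iff]; exact_mod_cast h
  push_cast at h1 h2
  linarith [lt_or_eq_of_le h1]

lemma nat_norm_dvd {n : ℕ} (h : p ∣ n) : ‖(n : ℚ_[p])‖ ≤ (p:ℝ)^(-1:ℤ) := by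
  have : ((p:ℤ)^1) ∣ (n:ℤ) := by simpa using Int.natCast_dvd_natCast.mpr h
  have := (Padic.norm_int_le_pow_iff_dvd (n:ℤ) 1).mpr this
  push_cast at this ⊢
  simpa using this

lemma ppow_mono {a b : ℤ} (h : a ≤ b) : (p:ℝ)^a ≤ (p:ℝ)^b :=
  zpow_le_zpow_right₀ (by exact_mod_cast hp.out.one_lt.le) h

lemma ppow_pos : ∀ a : ℤ, (0:ℝ) < (p:ℝ)^a := fun a =>
  zpow_pos (by exact_mod_cast hp.out.pos) a

lemma not_dvd_small {n : ℕ} (h1 : 0 < n) (h2 : n < 2*p) (h3 : n ≠ p) : ¬ p ∣ n := by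
  rintro ⟨c, rfl⟩
  have hc2 : c < 2 := by
    by_contra hc; push_neg at hc; nlinarith [hp.out.pos]
  interval_cases c <;> omega

lemma dvd_sum_pow {i : ℕ} (hi : 0 < i) (h : ¬ (p-1) ∣ i) :
    p ∣ ∑ k ∈ range p, k ^ i := by
  classical
  rw [← ZMod.natCast_eq_zero_iff]
  push_cast
  have key : ∑ x : ZMod p, x ^ i = 0 := by
    have hq : ¬ (Fintype.card (ZMod p) - 1) ∣ i := by rwa [ZMod.card p]
    let φ : (ZMod p)ˣ ↪ ZMod p := ⟨fun x ↦ x, fun _ _ h => Units.ext h⟩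
    have huniv : univ.map φ = univ \ {0} := by
      ext x
      simp only [mem_map, mem_univ, Function.Embedding.coeFn_mk, true_and, mem_sdiff,
        mem_singleton, φ]
      exact isUnit_iff_ne_zero
    calc
      ∑ x : ZMod p, x ^ i = ∑ x ∈ univ \ {(0 : ZMod p)}, x ^ i := by
        rw [← sum_sdiff ({0} : Finset (ZMod p)).subset_univ, sum_singleton, zero_pow hi.ne',
          add_zero]
      _ = ∑ x : (ZMod p)ˣ, (x ^ i : ZMod p) := by simp [φ, ← huniv, univ.sum_map φ]; rfl
      _ = 0 := by rw [FiniteField.sum_pow_units (ZMod p) i, if_neg hq]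
  rw [← key]
  refine Finset.sum_nbij' (fun k => (k : ZMod p)) (fun x => x.val) ?_ ?_ ?_ ?_ ?_
  · intros; exact mem_univ _
  · intro a _; exact mem_range.mpr (ZMod.val_lt a)
  · intro a ha; exact ZMod.val_natCast_of_lt (mem_range.mp ha)
  · intro a _; exact ZMod.natCast_rightInverse a
  · intros; rfl

lemma S_norm_le {i : ℕ} (hi : 0 < i) (h : ¬ (p-1) ∣ i) :
    ‖∑ k ∈ range p, (k : ℚ_[p]) ^ i‖ ≤ (p:ℝ)^(-1:ℤ) := by
  have h1 : ((∑ k ∈ range p, k ^ i : ℕ) : ℚ_[p]) = ∑ k ∈ range p, (k : ℚ_[p]) ^ i := by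
    push_cast; rfl
  rw [← h1]
  exact nat_norm_dvd p (dvd_sum_pow p hi h)

lemma S_norm_le_one (i : ℕ) : ‖∑ k ∈ range p, (k : ℚ_[p]) ^ i‖ ≤ 1 := by
  have h1 : ((∑ k ∈ range p, k ^ i : ℕ) : ℚ_[p]) = ∑ k ∈ range p, (k : ℚ_[p]) ^ i := by
    push_cast; rfl
  rw [← h1]
  exact nat_norm_le_one p _

lemma faulhaber (m : ℕ) :
    ∑ k ∈ range p, (k : ℚ_[p]) ^ m =
      ∑ i ∈ range (m+1), ((bernoulli i : ℚ) : ℚ_[p]) * ((m+1).choose i : ℚ_[p])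
        * (p : ℚ_[p]) ^ (m+1-i) / ((m+1 : ℕ) : ℚ_[p]) := by
  have h := sum_range_pow p m
  have h2 := congrArg (fun q : ℚ => (q : ℚ_[p])) h
  push_cast at h2
  convert h2 using 2 <;> push_cast <;> ring

/-- Faulhaber split: sum of powers = tail + p * B_m. -/
lemma faulhaber_split (m : ℕ) :
    ∑ k ∈ range p, (k : ℚ_[p]) ^ m =
      (∑ i ∈ range m, ((bernoulli i : ℚ) : ℚ_[p]) * ((m+1).choose i : ℚ_[p])
        * (p : ℚ_[p]) ^ (m+1-i) / ((m+1 : ℕ) : ℚ_[p]))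
      + (p : ℚ_[p]) * ((bernoulli m : ℚ) : ℚ_[p]) := by
  rw [faulhaber p m, Finset.sum_range_succ]
  congr 1
  have h1 : (m+1) - m = 1 := by omega
  have h2 : (m+1).choose m = m+1 := by simp
  rw [h1, h2]
  have h3 : ((m:ℚ_[p]) + 1) ≠ 0 := Nat.cast_add_one_ne_zero m
  push_cast
  field_simp

/-- Generic bound for a tail term. -/
lemma term_bound {i m : ℕ} (him : i < m) {β δ γ t : ℤ}
    (hB : ‖((bernoulli i : ℚ) : ℚ_[p])‖ ≤ (p:ℝ)^β)
    (hC : ‖(((m+1).choose i : ℕ) : ℚ_[p])‖ ≤ (p:ℝ)^δ)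
    (hinv : ‖(((m+1 : ℕ) : ℚ_[p]))⁻¹‖ ≤ (p:ℝ)^γ)
    (ht : β + δ + γ - ((m+1-i : ℕ) : ℤ) ≤ t) :
    ‖((bernoulli i : ℚ) : ℚ_[p]) * ((m+1).choose i : ℚ_[p])
        * (p : ℚ_[p]) ^ (m+1-i) / ((m+1 : ℕ) : ℚ_[p])‖ ≤ (p:ℝ)^t := by
  have hp0 : ((p:ℝ)) ≠ 0 := by exact_mod_cast hp.out.pos.ne'
  have hpe : ‖(p : ℚ_[p]) ^ (m+1-i)‖ = (p:ℝ)^(-((m+1-i : ℕ):ℤ)) := by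
    simpa using padicNormE.norm_p_pow (p := p) (m+1-i)
  rw [div_eq_mul_inv]
  calc ‖((bernoulli i : ℚ) : ℚ_[p]) * ((m+1).choose i : ℚ_[p])
        * (p : ℚ_[p]) ^ (m+1-i) * (((m+1 : ℕ) : ℚ_[p]))⁻¹‖
      ≤ ((p:ℝ)^β * (p:ℝ)^δ * (p:ℝ)^(-((m+1-i : ℕ):ℤ))) * (p:ℝ)^γ := by
        refine norm_mul_le_of_le (norm_mul_le_of_le (norm_mul_le_of_le hB hC) ?_) hinv
        rw [hpe]
    _ = (p:ℝ)^(β + δ + γ - ((m+1-i : ℕ) : ℤ)) := by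
        rw [← zpow_add₀ hp0, ← zpow_add₀ hp0, ← zpow_add₀ hp0]; ring_nf
    _ ≤ (p:ℝ)^t := ppow_mono p ht


lemma norm_sub_le_max' (x y : ℚ_[p]) : ‖x - y‖ ≤ max ‖x‖ ‖y‖ := by
  rw [sub_eq_add_neg]
  simpa using IsUltrametricDist.norm_add_le_max x (-y)

lemma norm_sub_le_of_le {x y : ℚ_[p]} {C : ℝ} (hx : ‖x‖ ≤ C) (hy : ‖y‖ ≤ C) : ‖x - y‖ ≤ C :=
  le_trans (norm_sub_le_max' p x y) (max_le hx hy)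

lemma norm_add_le_of_le' {x y : ℚ_[p]} {C : ℝ} (hx : ‖x‖ ≤ C) (hy : ‖y‖ ≤ C) : ‖x + y‖ ≤ C :=
  le_trans (IsUltrametricDist.norm_add_le_max x y) (max_le hx hy)

lemma norm_of_p_mul {x : ℚ_[p]} {c : ℤ} (h : ‖(p:ℚ_[p]) * x‖ ≤ (p:ℝ)^(c-1)) : ‖x‖ ≤ (p:ℝ)^c := by
  have hppos : (0:ℝ) < p := by exact_mod_cast hp.out.pos
  rw [norm_mul, Padic.norm_p] at h
  have h2 : (p:ℝ) * ((p:ℝ)⁻¹ * ‖x‖) ≤ (p:ℝ) * (p:ℝ)^(c-1) :=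
    mul_le_mul_of_nonneg_left h (le_of_lt hppos)
  calc ‖x‖ = (p:ℝ) * ((p:ℝ)⁻¹ * ‖x‖) := by field_simp
    _ ≤ (p:ℝ) * (p:ℝ)^(c-1) := h2
    _ = (p:ℝ)^(c-1) * (p:ℝ) := by ring
    _ = (p:ℝ)^c := by
        rw [← zpow_add_one₀ (ne_of_gt hppos)]
        congr 1
        ring

lemma bern_odd_zero {n : ℕ} (h : Odd n) (h1 : 1 < n) : bernoulli n = 0 := by
  rw [bernoulli_eq_bernoulli'_of_ne_one (by omega)]
  exact bernoulli'_eq_zero_of_odd h h1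

lemma inv_norm_one {n : ℕ} (h : ¬ p ∣ n) : ‖((n : ℚ_[p]))⁻¹‖ ≤ (p:ℝ)^(0:ℤ) := by
  rw [norm_inv, nat_norm_eq_one p h]; simp

lemma inv_norm_p : ‖((p : ℚ_[p]))⁻¹‖ ≤ (p:ℝ)^(1:ℤ) := by
  rw [norm_inv, Padic.norm_p]; simp

lemma not_sub_one_dvd (hp3 : 3 < p) {i : ℕ} (hi : 0 < i) (hle : i ≤ 2*p - 4)
    (hne : i ≠ p - 1) : ¬ (p - 1) ∣ i := by
  rintro ⟨c, hc⟩
  have hc1 : 1 ≤ c := by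
    rcases Nat.eq_zero_or_pos c with rfl | h; · omega
    · exact h
  have h2 : (p-1)*2 ≤ (p-1)*c := by
    by_contra hcon
    push_neg at hcon
    have : c < 2 := by
      by_contra h4; push_neg at h4
      exact absurd (Nat.mul_le_mul_left (p-1) h4) (by omega)
    interval_cases c <;> omega
  have h3 := le_trans h2 (hc ▸ hle)
  omega

lemma bern_bound (hp3 : 3 < p) :
    ∀ i, i ≤ 2*p - 4 →
      ‖((bernoulli i : ℚ) : ℚ_[p])‖ ≤ (if i = p-1 then (p:ℝ)^(1:ℤ) else (p:ℝ)^(0:ℤ)) := by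
  have hppos : (0:ℝ) < p := by exact_mod_cast hp.out.pos
  intro i
  induction i using Nat.strong_induction_on with
  | _ i IH =>
    intro hle
    rcases Nat.eq_zero_or_pos i with rfl | hi
    · rw [if_neg (by omega), bernoulli_zero]
      norm_num
    by_cases hipm : i = p - 1
    · subst hipm
      rw [if_pos rfl]
      have hm1 : p - 1 + 1 = p := by omega
      have heq : (p : ℚ_[p]) * ((bernoulli (p-1) : ℚ) : ℚ_[p]) =
          (∑ k ∈ range p, (k : ℚ_[p]) ^ (p-1)) -
          (∑ k ∈ range (p-1), ((bernoulli k : ℚ) : ℚ_[p]) * (((p-1)+1).choose k : ℚ_[p])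
            * (p : ℚ_[p]) ^ ((p-1)+1-k) / (((p-1)+1 : ℕ) : ℚ_[p])) := by
        rw [faulhaber_split p (p-1)]; ring
      have hT : ‖(∑ k ∈ range (p-1), ((bernoulli k : ℚ) : ℚ_[p]) * (((p-1)+1).choose k : ℚ_[p])
            * (p : ℚ_[p]) ^ ((p-1)+1-k) / (((p-1)+1 : ℕ) : ℚ_[p]))‖ ≤ (p:ℝ)^(0:ℤ) := by
        apply IsUltrametricDist.norm_sum_le_of_forall_le_of_nonneg (by positivity)
        intro k hk
        have hkm : k < p - 1 := mem_range.mp hk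
        have hB : ‖((bernoulli k : ℚ) : ℚ_[p])‖ ≤ (p:ℝ)^(0:ℤ) := by
          have := IH k (by omega) (by omega)
          rwa [if_neg (by omega)] at this
        have hinv : ‖((((p-1)+1 : ℕ) : ℚ_[p]))⁻¹‖ ≤ (p:ℝ)^(1:ℤ) := by
          rw [hm1]; exact inv_norm_p p
        rcases Nat.eq_zero_or_pos k with rfl | hk1
        · refine term_bound p (m := p-1) (δ := 0) (by omega) hB ?_ hinv ?_
          · simp
          · have : ((p-1)+1-0 : ℕ) = p := by omega
            rw [this]; push_cast; omega
        · refine term_bound p (δ := -1) (by omega) hB ?_ hinv ?_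
          · have hdvd : p ∣ ((p-1)+1).choose k := by
              rw [hm1]; exact hp.out.dvd_choose_self (by omega) (by omega)
            exact nat_norm_dvd p hdvd
          · have h2 : 2 ≤ ((p-1)+1-k : ℕ) := by omega
            have : (2:ℤ) ≤ (((p-1)+1-k : ℕ) : ℤ) := by exact_mod_cast h2
            omega
      have hS : ‖∑ k ∈ range p, (k : ℚ_[p]) ^ (p-1)‖ ≤ (p:ℝ)^(0:ℤ) := by
        simpa using S_norm_le_one p (p-1)
      have key : ‖(p : ℚ_[p]) * ((bernoulli (p-1) : ℚ) : ℚ_[p])‖ ≤ (p:ℝ)^(0:ℤ) := by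
        rw [heq]
        exact norm_sub_le_of_le p hS hT
      exact norm_of_p_mul p (by simpa using key)
    · rw [if_neg hipm]
      have hdvd : ¬ (p - 1) ∣ i := not_sub_one_dvd p hp3 hi hle hipm
      have heq : (p : ℚ_[p]) * ((bernoulli i : ℚ) : ℚ_[p]) =
          (∑ k ∈ range p, (k : ℚ_[p]) ^ i) -
          (∑ k ∈ range i, ((bernoulli k : ℚ) : ℚ_[p]) * ((i+1).choose k : ℚ_[p])
            * (p : ℚ_[p]) ^ (i+1-k) / ((i+1 : ℕ) : ℚ_[p])) := by
        rw [faulhaber_split p i]; ring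
      have hT : ‖(∑ k ∈ range i, ((bernoulli k : ℚ) : ℚ_[p]) * ((i+1).choose k : ℚ_[p])
            * (p : ℚ_[p]) ^ (i+1-k) / ((i+1 : ℕ) : ℚ_[p]))‖ ≤ (p:ℝ)^(-1:ℤ) := by
        apply IsUltrametricDist.norm_sum_le_of_forall_le_of_nonneg (by positivity)
        intro k hk
        have hkm : k < i := mem_range.mp hk
        have hB : ‖((bernoulli k : ℚ) : ℚ_[p])‖ ≤ (p:ℝ)^(1:ℤ) := by
          refine le_trans (IH k (by omega) (by omega)) ?_
          split
          · exact le_refl _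
          · exact ppow_mono p (by omega)
        have hinv : ‖(((i+1 : ℕ) : ℚ_[p]))⁻¹‖ ≤ (p:ℝ)^(0:ℤ) :=
          inv_norm_one p (not_dvd_small p (by omega) (by omega) (by omega))
        refine term_bound p (δ := 0) hkm hB (by simpa using nat_norm_le_one p ((i+1).choose k)) hinv ?_
        have h2 : 2 ≤ (i+1-k : ℕ) := by omega
        have : (2:ℤ) ≤ ((i+1-k : ℕ) : ℤ) := by exact_mod_cast h2
        omega
      have hS : ‖∑ k ∈ range p, (k : ℚ_[p]) ^ i‖ ≤ (p:ℝ)^(-1:ℤ) := S_norm_le p hi hdvd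
      have key : ‖(p : ℚ_[p]) * ((bernoulli i : ℚ) : ℚ_[p])‖ ≤ (p:ℝ)^(-1:ℤ) := by
        rw [heq]
        exact norm_sub_le_of_le p hS hT
      exact norm_of_p_mul p (by simpa using key)


lemma five_le (hp3 : 3 < p) : 5 ≤ p := by
  have h4 : p ≠ 4 := by
    intro h
    have := hp.out
    rw [h] at this
    norm_num at this
  omega

lemma odd_p (hp3 : 3 < p) : Odd p := by
  rcases hp.out.eq_two_or_odd' with h | h
  · omega
  · exact h

lemma S1_congr (hp3 : 3 < p) :
    ‖(∑ k ∈ range p, (k:ℚ_[p])^(p-1)) - (p:ℚ_[p]) * ((bernoulli (p-1):ℚ):ℚ_[p])‖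
      ≤ (p:ℝ)^(-3:ℤ) := by
  have hp5 := five_le p hp3
  obtain ⟨t, ht⟩ := odd_p p hp3
  rw [faulhaber_split p (p-1), add_sub_cancel_right]
  apply IsUltrametricDist.norm_sum_le_of_forall_le_of_nonneg (by positivity)
  intro k hk
  have hkm : k < p - 1 := mem_range.mp hk
  have hm1 : p - 1 + 1 = p := by omega
  have hinv : ‖((((p-1)+1 : ℕ) : ℚ_[p]))⁻¹‖ ≤ (p:ℝ)^(1:ℤ) := by
    rw [hm1]; exact inv_norm_p p
  by_cases hk2 : k = p - 2
  · have hodd : Odd (p-2) := ⟨t - 1, by omega⟩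
    have hzero : bernoulli k = 0 := by
      rw [hk2]; exact bern_odd_zero (hodd) (by omega)
    rw [hzero]
    simp only [Rat.cast_zero, zero_mul, zero_div, norm_zero]
    positivity
  rcases Nat.eq_zero_or_pos k with rfl | hk1
  · refine term_bound p (m := p-1) (β := 0) (δ := 0) (by omega) ?_ (by simp) hinv ?_
    · simp [bernoulli_zero]
    · have h2 : ((p-1)+1-0 : ℕ) = p := by omega
      rw [h2]
      omega
  · have hB : ‖((bernoulli k : ℚ) : ℚ_[p])‖ ≤ (p:ℝ)^(0:ℤ) := by
      have := bern_bound p hp3 k (by omega)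
      rwa [if_neg (by omega)] at this
    refine term_bound p (δ := -1) hkm hB ?_ hinv ?_
    · have hdvd : p ∣ ((p-1)+1).choose k := by
        rw [hm1]; exact hp.out.dvd_choose_self (by omega) (by omega)
      exact nat_norm_dvd p hdvd
    · have h2 : 3 ≤ ((p-1)+1-k : ℕ) := by omega
      have : (3:ℤ) ≤ (((p-1)+1-k : ℕ) : ℤ) := by exact_mod_cast h2
      omega

lemma S2_congr (hp3 : 3 < p) :
    ‖(∑ k ∈ range p, (k:ℚ_[p])^(2*(p-1))) - (p:ℚ_[p]) * ((bernoulli (2*(p-1)):ℚ):ℚ_[p])‖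
      ≤ (p:ℝ)^(-3:ℤ) := by
  have hp5 := five_le p hp3
  rw [faulhaber_split p (2*(p-1)), add_sub_cancel_right]
  apply IsUltrametricDist.norm_sum_le_of_forall_le_of_nonneg (by positivity)
  intro k hk
  have hkm : k < 2*(p-1) := mem_range.mp hk
  have hinv : ‖(((2*(p-1)+1 : ℕ) : ℚ_[p]))⁻¹‖ ≤ (p:ℝ)^(0:ℤ) :=
    inv_norm_one p (not_dvd_small p (by omega) (by omega) (by omega))
  by_cases hodd : Odd k ∧ 1 < k
  · have hzero : bernoulli k = 0 := bern_odd_zero hodd.1 hodd.2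
    rw [hzero]
    simp only [Rat.cast_zero, zero_mul, zero_div, norm_zero]
    positivity
  by_cases hk1 : k = p - 1
  · have hB : ‖((bernoulli k : ℚ) : ℚ_[p])‖ ≤ (p:ℝ)^(1:ℤ) := by
      have := bern_bound p hp3 k (by omega)
      rwa [if_pos hk1] at this
    have hC : ‖((2*(p-1)+1).choose k : ℚ_[p])‖ ≤ (p:ℝ)^(0:ℤ) := by
      simpa using nat_norm_le_one p ((2*(p-1)+1).choose k)
    refine term_bound p hkm hB hC hinv ?_
    have h2 : (p:ℕ) ≤ (2*(p-1)+1-k : ℕ) := by omega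
    have : ((p:ℕ):ℤ) ≤ ((2*(p-1)+1-k : ℕ) : ℤ) := by exact_mod_cast h2
    omega
  · -- k is even or k ≤ 1, and k ≠ p-1; so k ≤ 2p-4
    have hkle : k ≤ 2*p - 4 := by
      by_contra hcon
      push_neg at hcon
      have hk23 : k = 2*p - 3 := by omega
      apply hodd
      constructor
      · exact ⟨p - 2, by omega⟩
      · omega
    have hB : ‖((bernoulli k : ℚ) : ℚ_[p])‖ ≤ (p:ℝ)^(0:ℤ) := by
      have := bern_bound p hp3 k hkle
      rwa [if_neg hk1] at this
    have hC : ‖((2*(p-1)+1).choose k : ℚ_[p])‖ ≤ (p:ℝ)^(0:ℤ) := by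
      simpa using nat_norm_le_one p ((2*(p-1)+1).choose k)
    refine term_bound p hkm hB hC hinv ?_
    have h2 : 3 ≤ (2*(p-1)+1-k : ℕ) := by omega
    have : (3:ℤ) ≤ ((2*(p-1)+1-k : ℕ) : ℤ) := by exact_mod_cast h2
    omega


lemma norm_one_add_le {x : ℚ_[p]} (hx : ‖x‖ ≤ 1) : ‖1 + x‖ ≤ 1 :=
  norm_add_le_of_le' p (by simp) hx

lemma pow_one_add_sub_one {x : ℚ_[p]} (hx : ‖x‖ ≤ 1) (n : ℕ) :
    ‖(1+x)^n - 1‖ ≤ ‖x‖ := by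
  induction n with
  | zero => simp
  | succ n IH =>
    have key : (1+x)^(n+1) - 1 = ((1+x)^n - 1)*(1+x) + x := by ring
    rw [key]
    refine norm_add_le_of_le' p ?_ le_rfl
    calc ‖((1+x)^n - 1)*(1+x)‖ ≤ ‖x‖ * 1 := norm_mul_le_of_le IH (norm_one_add_le p hx)
    _ = ‖x‖ := mul_one _

lemma sq_norm_le {x : ℚ_[p]} {c : ℤ} (hx : ‖x‖ ≤ (p:ℝ)^c) : ‖x*x‖ ≤ (p:ℝ)^(2*c) := by
  calc ‖x*x‖ ≤ (p:ℝ)^c * (p:ℝ)^c := norm_mul_le_of_le hx hx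
  _ = (p:ℝ)^(2*c) := by
      rw [← zpow_add₀ (by exact_mod_cast hp.out.pos.ne' : (p:ℝ) ≠ 0)]
      congr 1
      ring

lemma norm_half_mul {x : ℚ_[p]} {c : ℝ} (hp3 : 3 < p) (hx : ‖x‖ ≤ c) : ‖x/2‖ ≤ c := by
  have h2 : ‖(2:ℚ_[p])‖ = 1 := by
    have h2d : ¬ p ∣ 2 := fun hdvd => by
      have := Nat.le_of_dvd (by norm_num) hdvd
      omega
    have := nat_norm_eq_one p h2d
    simpa using this
  rw [div_eq_mul_inv]
  calc ‖x * (2:ℚ_[p])⁻¹‖ ≤ c * 1 := norm_mul_le_of_le hx (by rw [norm_inv, h2]; simp)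
  _ = c := mul_one _

lemma prod_expand (hp3 : 3 < p) (s : Finset ℕ) (a : ℕ → ℚ_[p])
    (ha : ∀ i ∈ s, ‖a i‖ ≤ (p:ℝ)^(-1:ℤ)) :
    ‖(∏ i ∈ s, (1 + a i)) -
      (1 + (∑ i ∈ s, a i) + ((∑ i ∈ s, a i)*(∑ i ∈ s, a i) - ∑ i ∈ s, (a i)*(a i))/2)‖
      ≤ (p:ℝ)^(-3:ℤ) := by
  induction s using Finset.cons_induction with
  | empty => simp
  | cons j s hj IH =>
    have hb : ‖a j‖ ≤ (p:ℝ)^(-1:ℤ) := ha j (mem_cons_self j s)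
    have ha' : ∀ i ∈ s, ‖a i‖ ≤ (p:ℝ)^(-1:ℤ) := fun i hi => ha i (mem_cons.mpr (Or.inr hi))
    have hE : ‖∑ i ∈ s, a i‖ ≤ (p:ℝ)^(-1:ℤ) :=
      IsUltrametricDist.norm_sum_le_of_forall_le_of_nonneg (by positivity) ha'
    have hF : ‖∑ i ∈ s, (a i)*(a i)‖ ≤ (p:ℝ)^(-2:ℤ) := by
      apply IsUltrametricDist.norm_sum_le_of_forall_le_of_nonneg (by positivity)
      intro i hi
      simpa using sq_norm_le p (ha' i hi)
    have hE2 : ‖(∑ i ∈ s, a i)*(∑ i ∈ s, a i)‖ ≤ (p:ℝ)^(-2:ℤ) := by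
      simpa using sq_norm_le p hE
    rw [prod_cons, sum_cons, sum_cons]
    have key : (1 + a j) * ∏ i ∈ s, (1 + a i) -
        (1 + (a j + ∑ i ∈ s, a i) +
          ((a j + ∑ i ∈ s, a i)*(a j + ∑ i ∈ s, a i) - (a j * a j + ∑ i ∈ s, (a i)*(a i)))/2)
      = (1 + a j) * ((∏ i ∈ s, (1 + a i)) -
          (1 + (∑ i ∈ s, a i) +
            ((∑ i ∈ s, a i)*(∑ i ∈ s, a i) - ∑ i ∈ s, (a i)*(a i))/2))
        + a j * (((∑ i ∈ s, a i)*(∑ i ∈ s, a i) - ∑ i ∈ s, (a i)*(a i))/2) := by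
      ring
    rw [key]
    refine norm_add_le_of_le' p ?_ ?_
    · have h1 : ‖(1 + a j)‖ ≤ 1 := norm_one_add_le p (le_trans hb (by
        simpa using ppow_mono p (by omega : (-1:ℤ) ≤ 0)))
      calc ‖(1 + a j) * _‖ ≤ 1 * (p:ℝ)^(-3:ℤ) := norm_mul_le_of_le h1 (IH ha')
      _ = (p:ℝ)^(-3:ℤ) := one_mul _
    · have hEF : ‖((∑ i ∈ s, a i)*(∑ i ∈ s, a i) - ∑ i ∈ s, (a i)*(a i))/2‖ ≤ (p:ℝ)^(-2:ℤ) :=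
        norm_half_mul p hp3 (norm_sub_le_of_le p hE2 hF)
      calc ‖a j * _‖ ≤ (p:ℝ)^(-1:ℤ) * (p:ℝ)^(-2:ℤ) := norm_mul_le_of_le hb hEF
      _ = (p:ℝ)^(-3:ℤ) := by
          rw [← zpow_add₀ (by exact_mod_cast hp.out.pos.ne' : (p:ℝ) ≠ 0)]
          norm_num

lemma fermat_norm (hp3 : 3 < p) {j : ℕ} (hj : j ∈ Finset.Ico 1 p) :
    ‖((j:ℚ_[p]))^(p-1) - 1‖ ≤ (p:ℝ)^(-1:ℤ) := by
  obtain ⟨hj1, hjp⟩ := Finset.mem_Ico.mp hj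
  have hjz : (j : ZMod p) ≠ 0 := by
    rw [Ne, ZMod.natCast_eq_zero_iff]
    intro hdvd
    have := Nat.le_of_dvd (by omega) hdvd
    omega
  have hferm : ((j:ZMod p))^(p-1) = 1 := ZMod.pow_card_sub_one_eq_one hjz
  have hdvd : ((p:ℤ)^1) ∣ ((j^(p-1) : ℕ) : ℤ) - 1 := by
    rw [pow_one]
    have : (((j^(p-1) : ℕ) : ℤ) - 1 : ZMod p) = 0 := by
      push_cast
      rw [hferm]  -- may need massaging
      ring
    rw [← ZMod.intCast_zmod_eq_zero_iff_dvd]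
    push_cast
    rw [hferm]
    ring
  have hnorm := (Padic.norm_int_le_pow_iff_dvd (((j^(p-1) : ℕ) : ℤ) - 1) 1).mpr hdvd
  have hcast : ((((j^(p-1) : ℕ) : ℤ) - 1 : ℤ) : ℚ_[p]) = ((j:ℚ_[p]))^(p-1) - 1 := by
    push_cast
    ring
  rw [hcast] at hnorm
  exact_mod_cast hnorm


lemma sum_Ico_range (m : ℕ) (hm : m ≠ 0) :
    ∑ k ∈ Ico 1 p, (k:ℚ_[p])^m = ∑ k ∈ range p, (k:ℚ_[p])^m := by
  have hppos : 0 < p := hp.out.pos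
  have h0 : insert 0 (Ico 1 p) = Ico 0 p := by
    ext x
    simp only [mem_insert, mem_Ico]
    omega
  rw [range_eq_Ico, ← h0, Finset.sum_insert (by simp)]
  simp [zero_pow hm]

lemma prod_eq_fact :
    ∏ j ∈ Ico 1 p, (1 + (((j:ℚ_[p]))^(p-1) - 1)) = (((p-1).factorial : ℕ) : ℚ_[p])^(p-1) := by
  have hppos : 0 < p := hp.out.pos
  have h1 : ∀ j ∈ Ico 1 p, 1 + (((j:ℚ_[p]))^(p-1) - 1) = ((j:ℚ_[p]))^(p-1) :=
    fun j _ => by ring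
  rw [Finset.prod_congr rfl h1, Finset.prod_pow]
  congr 1
  have h2 : ∏ i ∈ Ico 1 ((p-1)+1), i = (p-1).factorial := Finset.prod_Ico_id_eq_factorial (p-1)
  rw [show (p-1)+1 = p by omega] at h2
  rw [← h2]
  push_cast
  rfl

lemma fact_pow_norm (hp3 : 3 < p)
    (hW : ‖((((p - 1).factorial + 1 : ℚ) / p : ℚ) : ℚ_[p])‖ ≤ (p : ℝ) ^ (-2 : ℤ)) :
    ‖(((p-1).factorial : ℕ) : ℚ_[p])^(p-1) - 1‖ ≤ (p:ℝ)^(-3:ℤ) := by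
  have hppos : (0:ℝ) < p := by exact_mod_cast hp.out.pos
  obtain ⟨t, ht⟩ := odd_p p hp3
  -- norm of (p-1)! + 1
  have hfq : (((p-1).factorial : ℚ) + 1 : ℚ) = (p:ℚ) * ((((p - 1).factorial + 1 : ℚ) / p : ℚ)) := by
    field_simp
  have hy : ‖(((p-1).factorial : ℕ) : ℚ_[p]) + 1‖ ≤ (p:ℝ)^(-3:ℤ) := by
    have hcast : (((p-1).factorial : ℕ) : ℚ_[p]) + 1 =
        (p:ℚ_[p]) * (((((p - 1).factorial + 1 : ℚ) / p : ℚ)) : ℚ_[p]) := by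
      have := congrArg (fun q : ℚ => (q : ℚ_[p])) hfq
      push_cast at this ⊢
      convert this using 2
    rw [hcast]
    calc ‖(p:ℚ_[p]) * (((((p - 1).factorial + 1 : ℚ) / p : ℚ)) : ℚ_[p])‖
        ≤ (p:ℝ)^(-1:ℤ) * (p:ℝ)^(-2:ℤ) := by
          refine norm_mul_le_of_le ?_ hW
          rw [Padic.norm_p]
          simp
      _ = (p:ℝ)^(-3:ℤ) := by
          rw [← zpow_add₀ (ne_of_gt hppos)]
          norm_num
  have heven : Even (p-1) := ⟨t, by omega⟩
  have hx : (((p-1).factorial : ℕ) : ℚ_[p]) =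
      -(1 + (-((((p-1).factorial : ℕ) : ℚ_[p]) + 1))) := by ring
  rw [hx, neg_pow, Even.neg_one_pow heven, one_mul]
  have hle1 : ‖-((((p-1).factorial : ℕ) : ℚ_[p]) + 1)‖ ≤ 1 := by
    rw [norm_neg]
    refine le_trans hy (le_trans (ppow_mono p (by omega : (-3:ℤ) ≤ 0)) (by simp))
  refine le_trans (pow_one_add_sub_one p hle1 (p-1)) ?_
  rw [norm_neg]
  exact hy

end SuperWilson

/-- Super-Wilson primes: for a prime `p > 3` with Wilson quotient
`W_p = ((p-1)! + 1)/p`, if `v_p(W_p) ≥ 2` then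
`4(B_{p-1} − R) ≡ B_{2(p-1)} − R (mod p²)` where `R = 1 − 1/p`; the congruence
means the difference has `p`-adic norm at most `p⁻²`. -/
theorem super_wilson_congruence (p : ℕ) [hp : Fact p.Prime] (hp3 : 3 < p)
    (hW : ‖((((p - 1).factorial + 1 : ℚ) / p : ℚ) : ℚ_[p])‖ ≤ (p : ℝ) ^ (-2 : ℤ)) :
    ‖((4 * (bernoulli (p - 1) - (1 - 1 / p))
        - (bernoulli (2 * (p - 1)) - (1 - 1 / p)) : ℚ) : ℚ_[p])‖
      ≤ (p : ℝ) ^ (-2 : ℤ) := by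
  open SuperWilson in
  have hp5 := five_le p hp3
  have hppos : (0:ℝ) < p := by exact_mod_cast hp.out.pos
  have hpne : (p:ℝ) ≠ 0 := ne_of_gt hppos
  set a : ℕ → ℚ_[p] := fun j => ((j:ℚ_[p]))^(p-1) - 1 with ha_def
  have hfermat : ∀ j ∈ Ico 1 p, ‖a j‖ ≤ (p:ℝ)^(-1:ℤ) := fun j hj => fermat_norm p hp3 hj
  set E := ∑ j ∈ Ico 1 p, a j with hE_def
  set F := ∑ j ∈ Ico 1 p, (a j) * (a j) with hF_def
  have h1 := prod_expand p hp3 (Ico 1 p) a hfermat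
  have h2 : ‖(∏ j ∈ Ico 1 p, (1 + a j)) - 1‖ ≤ (p:ℝ)^(-3:ℤ) := by
    have := prod_eq_fact p
    simp only [ha_def]
    rw [this]
    exact fact_pow_norm p hp3 hW
  have h3 : ‖E + (E*E - F)/2‖ ≤ (p:ℝ)^(-3:ℤ) := by
    have hid : E + (E*E - F)/2 =
        ((∏ j ∈ Ico 1 p, (1 + a j)) - 1) -
        ((∏ j ∈ Ico 1 p, (1 + a j)) - (1 + E + (E*E - F)/2)) := by ring
    rw [hid]
    exact norm_sub_le_of_le p h2 h1
  have hE1 : ‖E‖ ≤ (p:ℝ)^(-1:ℤ) :=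
    IsUltrametricDist.norm_sum_le_of_forall_le_of_nonneg (by positivity) hfermat
  have hF1 : ‖F‖ ≤ (p:ℝ)^(-2:ℤ) := by
    apply IsUltrametricDist.norm_sum_le_of_forall_le_of_nonneg (by positivity)
    intro i hi
    simpa using sq_norm_le p (hfermat i hi)
  have hEE : ‖E*E‖ ≤ (p:ℝ)^(-2:ℤ) := by simpa using sq_norm_le p hE1
  have hhalf : ‖(E*E - F)/2‖ ≤ (p:ℝ)^(-2:ℤ) :=
    norm_half_mul p hp3 (norm_sub_le_of_le p hEE hF1)
  have hE2 : ‖E‖ ≤ (p:ℝ)^(-2:ℤ) := by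
    have hid : E = (E + (E*E - F)/2) - (E*E - F)/2 := by ring
    rw [hid]
    exact norm_sub_le_of_le p (le_trans h3 (ppow_mono p (by omega))) hhalf
  have hEE4 : ‖E*E‖ ≤ (p:ℝ)^(-4:ℤ) := by simpa using sq_norm_le p hE2
  have h4 : ‖2*E - F‖ ≤ (p:ℝ)^(-3:ℤ) := by
    have hid : 2*E - F = 2*(E + (E*E - F)/2) - E*E := by ring
    rw [hid]
    refine norm_sub_le_of_le p ?_ (le_trans hEE4 (ppow_mono p (by omega)))
    have h2n : ‖(2:ℚ_[p])‖ ≤ 1 := by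
      have := nat_norm_le_one p 2
      simpa using this
    calc ‖2*(E + (E*E - F)/2)‖ ≤ 1 * (p:ℝ)^(-3:ℤ) := norm_mul_le_of_le h2n h3
    _ = (p:ℝ)^(-3:ℤ) := one_mul _
  -- identify E and F with power sums
  set S1 := ∑ k ∈ range p, (k:ℚ_[p])^(p-1) with hS1_def
  set S2 := ∑ k ∈ range p, (k:ℚ_[p])^(2*(p-1)) with hS2_def
  have hSE : E = S1 - ((p:ℚ_[p]) - 1) := by
    rw [hE_def, hS1_def, ← sum_Ico_range p (p-1) (by omega)]
    rw [Finset.sum_sub_distrib, Finset.sum_const, Nat.card_Ico]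
    have : (((p - 1 : ℕ)) : ℚ_[p]) = (p:ℚ_[p]) - 1 := by
      push_cast [Nat.cast_sub (by omega : 1 ≤ p)]
      ring
    simp [this]
  have hSF : F = S2 - 2*S1 + ((p:ℚ_[p]) - 1) := by
    rw [hF_def, hS2_def, hS1_def, ← sum_Ico_range p (p-1) (by omega),
      ← sum_Ico_range p (2*(p-1)) (by omega)]
    have hptwise : ∀ j ∈ Ico 1 p, (a j) * (a j) =
        ((j:ℚ_[p]))^(2*(p-1)) - 2*((j:ℚ_[p]))^(p-1) + 1 := by
      intro j _
      have hpow : ((j:ℚ_[p]))^(2*(p-1)) = ((j:ℚ_[p]))^(p-1) * ((j:ℚ_[p]))^(p-1) := by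
        rw [← pow_add]
        congr 1
        ring
      rw [ha_def, hpow]
      ring
    rw [Finset.sum_congr rfl hptwise]
    rw [Finset.sum_add_distrib, Finset.sum_sub_distrib, Finset.sum_const, Nat.card_Ico,
      ← Finset.mul_sum]
    have : (((p - 1 : ℕ)) : ℚ_[p]) = (p:ℚ_[p]) - 1 := by
      push_cast [Nat.cast_sub (by omega : 1 ≤ p)]
      ring
    simp [this]
  -- main congruence for Bernoulli side
  set B1 := ((bernoulli (p-1) : ℚ) : ℚ_[p]) with hB1_def
  set B2 := ((bernoulli (2*(p-1)) : ℚ) : ℚ_[p]) with hB2_def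
  have hfinal : ‖4*((p:ℚ_[p])*B1) - (p:ℚ_[p])*B2 - 3*((p:ℚ_[p]) - 1)‖ ≤ (p:ℝ)^(-3:ℤ) := by
    have hid : 4*((p:ℚ_[p])*B1) - (p:ℚ_[p])*B2 - 3*((p:ℚ_[p]) - 1) =
        ((2*E - F) - 4*(S1 - (p:ℚ_[p])*B1)) + (S2 - (p:ℚ_[p])*B2) := by
      rw [hSE, hSF]
      ring
    rw [hid]
    refine norm_add_le_of_le' p (norm_sub_le_of_le p h4 ?_) (S2_congr p hp3)
    have h4n : ‖(4:ℚ_[p])‖ ≤ 1 := by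
      have := nat_norm_le_one p 4
      simpa using this
    calc ‖4*(S1 - (p:ℚ_[p])*B1)‖ ≤ 1 * (p:ℝ)^(-3:ℤ) := norm_mul_le_of_le h4n (S1_congr p hp3)
    _ = (p:ℝ)^(-3:ℤ) := one_mul _
  -- relate to the target
  have hpQ : ((p:ℚ)) * (4 * (bernoulli (p - 1) - (1 - 1 / p))
        - (bernoulli (2 * (p - 1)) - (1 - 1 / p)))
      = 4 * ((p:ℚ) * bernoulli (p-1)) - (p:ℚ) * bernoulli (2*(p-1)) - 3*((p:ℚ) - 1) := by
    have hq : (p:ℚ) ≠ 0 := by exact_mod_cast hp.out.pos.ne'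
    field_simp
    ring
  have hXK : (p:ℚ_[p]) * ((4 * (bernoulli (p - 1) - (1 - 1 / p))
        - (bernoulli (2 * (p - 1)) - (1 - 1 / p)) : ℚ) : ℚ_[p])
      = 4*((p:ℚ_[p])*B1) - (p:ℚ_[p])*B2 - 3*((p:ℚ_[p]) - 1) := by
    have := congrArg (fun q : ℚ => (q : ℚ_[p])) hpQ
    push_cast at this
    rw [hB1_def, hB2_def]
    push_cast
    convert this using 2
  have : ‖(p:ℚ_[p]) * ((4 * (bernoulli (p - 1) - (1 - 1 / p))
        - (bernoulli (2 * (p - 1)) - (1 - 1 / p)) : ℚ) : ℚ_[p])‖ ≤ (p:ℝ)^((-2:ℤ)-1) := by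
    rw [hXK]
    convert hfinal using 2
    norm_num
  exact norm_of_p_mul p this
end

section
/- Let χ be a nonprincipal Dirichlet character of conductor f > 1. If f has at least two distinct prime factors, then for every n ≥ 1, B_{n,χ}/n is an algebraic integer; if f = q^r is a prime power, then B_{n,χ}/n is p-integral for all primes p not dividing f. -/
open scoped Classical

/-- `x : ℂ` is `p`-integral: it satisfies a monic polynomial over `ℚ` all of
whose coefficients have nonnegative `p`-adic valuation (i.e. it is integral
over `ℤ` localized at `p`); equivalently, it has nonnegative valuation at
every prime above `p`. -/
def IsPIntegral (p : ℕ) (x : ℂ) : Prop :=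
  ∃ P : Polynomial ℚ, P.Monic ∧ (∀ i, 0 ≤ padicValRat p (P.coeff i)) ∧
    Polynomial.aeval x P = 0

/-- The generalized Bernoulli numbers `B_{n,χ}` of a Dirichlet character `χ`
of conductor `f`, packaged as the hypothesis that the exponential generating
function `∑ B_{n,χ} tⁿ/n!` satisfies
`(∑ B_{n,χ} tⁿ/n!)·(e^{ft} − 1) = ∑_{a=1}^{f} χ(a)·t·e^{at}`. -/
def IsGenBernoulli {f : ℕ} (χ : DirichletCharacter ℂ f) (B : ℕ → ℂ) : Prop :=
  (PowerSeries.mk fun n => B n / (n.factorial : ℂ)) *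
      (PowerSeries.rescale (f : ℂ) (PowerSeries.exp ℂ) - 1)
    = ∑ a ∈ Finset.Icc 1 f,
        χ (a : ZMod f) • (PowerSeries.X * PowerSeries.rescale (a : ℂ) (PowerSeries.exp ℂ))

open Finset Polynomial

noncomputable section CarlitzAux
namespace CarlitzAux

set_option linter.unusedSectionVars false

/-- universal integer polynomials giving EGF coefficients of `1/(e^t - c)`. -/
def V : ℕ → Polynomial ℤ
  | 0 => Polynomial.X
  | (m+1) => -Polynomial.X * ∑ i ∈ Finset.range (m+1),
      ((m+1).choose (i+1) : ℤ) • V (m - i)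
decreasing_by exact Nat.lt_succ_of_le (Nat.sub_le m i)

lemma V_zero : V 0 = Polynomial.X := by rw [V]

lemma V_succ (m : ℕ) : V (m+1) = -Polynomial.X * ∑ i ∈ Finset.range (m+1),
    ((m+1).choose (i+1) : ℤ) • V (m - i) := by rw [V]

lemma isIntegral_of_pow_eq_one {z : ℂ} {k : ℕ} (hk : k ≠ 0) (h : z ^ k = 1) :
    IsIntegral ℤ z := by
  refine ⟨Polynomial.X ^ k - 1, ?_, ?_⟩
  · simpa using Polynomial.monic_X_pow_sub_C (1 : ℤ) hk
  · simp [h]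

lemma int_sum {α : Type*} {s : Finset α} {g : α → ℂ}
    (h : ∀ a ∈ s, IsIntegral ℤ (g a)) : IsIntegral ℤ (∑ a ∈ s, g a) := by
  classical
  induction s using Finset.induction with
  | empty => simpa using isIntegral_zero
  | insert _ _ hnot ih =>
      rw [Finset.sum_insert hnot]
      exact (h _ (Finset.mem_insert_self _ _)).add
        (ih fun a ha => h a (Finset.mem_insert_of_mem ha))

lemma int_prod {α : Type*} {s : Finset α} {g : α → ℂ}
    (h : ∀ a ∈ s, IsIntegral ℤ (g a)) : IsIntegral ℤ (∏ a ∈ s, g a) := by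
  classical
  induction s using Finset.induction with
  | empty => simpa using isIntegral_one
  | insert _ _ hnot ih =>
      rw [Finset.prod_insert hnot]
      exact (h _ (Finset.mem_insert_self _ _)).mul
        (ih fun a ha => h a (Finset.mem_insert_of_mem ha))

lemma isIntegral_intCast (z : ℤ) : IsIntegral ℤ ((z : ℂ)) := by
  simpa using isIntegral_algebraMap (R := ℤ) (A := ℂ) (x := z)

variable {f : ℕ}

lemma pow_root_int {ζ : ℂ} (hζ : ζ ^ f = 1) (hf : f ≠ 0) (k : ℕ) :
    IsIntegral ℤ (ζ ^ k) :=
  isIntegral_of_pow_eq_one hf (by rw [← pow_mul, mul_comm, pow_mul, hζ, one_pow])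

lemma sum_range_zmod [NeZero f] (g : ZMod f → ℂ) :
    ∑ a ∈ range f, g a = ∑ x : ZMod f, g x := by
  refine Finset.sum_nbij' (fun a => (a : ZMod f)) (fun x => x.val) ?_ ?_ ?_ ?_ ?_
  · intro a _; exact Finset.mem_univ _
  · intro x _; exact Finset.mem_range.mpr (ZMod.val_lt x)
  · intro a ha; exact ZMod.val_cast_of_lt (Finset.mem_range.mp ha)
  · intro x _; simp [ZMod.natCast_val, ZMod.cast_id]
  · intro a _; rfl

lemma sum_range_drop_zero (hf : 0 < f) (F : ℕ → ℂ) (h0 : F 0 = 0) :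
    ∑ b ∈ range f, F b = ∑ b ∈ Ico 1 f, F b := by
  rw [Finset.range_eq_Ico, Finset.sum_eq_sum_Ico_succ_bot hf, h0, zero_add]

section tau
variable [NeZero f] (χ : DirichletCharacter ℂ f) {ζ : ℂ}

lemma chi_zero (hf : 1 < f) : χ (0 : ZMod f) = 0 := by
  refine MulChar.map_nonunit χ ?_
  intro h
  have h0 : ((0 : ℕ) : ZMod f) = (0 : ZMod f) := by simp
  rw [← h0] at h
  have := (ZMod.isUnit_iff_coprime 0 f).mp h
  simp [Nat.coprime_zero_left] at this
  omega

lemma chi_int (x : ZMod f) (hf : 1 < f) : IsIntegral ℤ (χ x) := by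
  by_cases hx : IsUnit x
  · have ht : f.totient ≠ 0 := (Nat.totient_pos.mpr (by omega)).ne'
    refine isIntegral_of_pow_eq_one ht ?_
    rw [← map_pow]
    have hxp : x ^ f.totient = ((hx.unit ^ f.totient : (ZMod f)ˣ) : ZMod f) := by
      rw [Units.val_pow_eq_pow_val, IsUnit.unit_spec]
    rw [hxp, ZMod.pow_totient hx.unit, Units.val_one, map_one]
  · rw [MulChar.map_nonunit χ hx]; exact isIntegral_zero

/-- twisted Gauss-type sum -/
def tau (χ : DirichletCharacter ℂ f) (ζ : ℂ) (b : ℕ) : ℂ :=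
  ∑ a ∈ range f, χ a * ζ ^ (a * b)

lemma tau_int (hf : 1 < f) (hζ : ζ ^ f = 1) (b : ℕ) : IsIntegral ℤ (tau χ ζ b) :=
  int_sum fun a _ => (chi_int χ _ hf).mul (pow_root_int hζ (by omega) _)

lemma tau_eq_gaussSum (hζ : IsPrimitiveRoot ζ f) (b : ℕ) :
    tau χ ζ b = gaussSum χ ((AddChar.zmodChar f hζ.pow_eq_one).mulShift b) := by
  rw [gaussSum, ← sum_range_zmod]
  refine Finset.sum_congr rfl fun a _ => ?_
  congr 1
  rw [AddChar.mulShift_apply]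
  have : ((b : ZMod f) * (a : ZMod f)) = ((b * a : ℕ) : ZMod f) := by push_cast; ring
  rw [this, AddChar.zmodChar_apply', mul_comm]

lemma tau_eq_zero (hζ : IsPrimitiveRoot ζ f) (hχ : χ.IsPrimitive) {b : ℕ}
    (hb : ¬ b.Coprime f) : tau χ ζ b = 0 := by
  rw [tau_eq_gaussSum χ hζ]
  refine gaussSum_eq_zero_of_isPrimitive_of_not_isPrimitive _ hχ ?_
  exact AddChar.not_isPrimitive_mulShift _ ((ZMod.isUnit_iff_coprime b f).not.mpr hb)

lemma ortho (hζ : IsPrimitiveRoot ζ f) (m : ℕ) :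
    ∑ b ∈ range f, ζ ^ (b * m) = if f ∣ m then (f : ℂ) else 0 := by
  have hfz : ζ ^ f = 1 := hζ.pow_eq_one
  simp_rw [mul_comm, pow_mul]
  by_cases h : f ∣ m
  · rw [if_pos h, (hζ.pow_eq_one_iff_dvd m).mpr h]
    simp
  · rw [if_neg h]
    have hne : ζ ^ m ≠ 1 := fun hc => h ((hζ.pow_eq_one_iff_dvd m).mp hc)
    rw [geom_sum_eq hne]
    have : (ζ ^ m) ^ f = 1 := by rw [← pow_mul, mul_comm, pow_mul, hfz, one_pow]
    rw [this, sub_self, zero_div]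

lemma chi_sum_filter (hf : 1 < f) (k : ℕ) :
    ∑ a ∈ range f, χ a * (if f ∣ (a + k) then (f : ℂ) else 0)
      = (f : ℂ) * χ (-(k : ZMod f)) := by
  set a₀ : ℕ := (-(k : ZMod f)).val with ha₀
  have ha₀mem : a₀ ∈ range f := Finset.mem_range.mpr (ZMod.val_lt _)
  have hcast : ((a₀ : ℕ) : ZMod f) = -(k : ZMod f) := by
    rw [ha₀, ZMod.natCast_val, ZMod.cast_id]
  rw [Finset.sum_eq_single_of_mem a₀ ha₀mem]
  · have hdvd : f ∣ a₀ + k := by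
      rw [← ZMod.natCast_eq_zero_iff]
      push_cast
      rw [hcast]; ring
    rw [if_pos hdvd, hcast]; ring
  · intro b hb hne
    have hnd : ¬ f ∣ b + k := by
      intro hc
      have h2 : ((b + k : ℕ) : ZMod f) = 0 := (ZMod.natCast_eq_zero_iff _ _).mpr hc
      push_cast at h2
      have hb' : (b : ZMod f) = -(k : ZMod f) := by linear_combination h2
      apply hne
      rw [ha₀, ← hb', ZMod.val_cast_of_lt (Finset.mem_range.mp hb)]
    rw [if_neg hnd, mul_zero]

lemma key_poly (hf : 1 < f) (hζ : IsPrimitiveRoot ζ f) (hne : χ ≠ 1) {j : ℕ} (hj : j < f) :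
    ∑ b ∈ Ico 1 f, ζ ^ b * tau χ ζ b * ζ ^ (b * (f - 1 - j)) = (f : ℂ) * χ (j : ZMod f) := by
  have hterm : ∀ b : ℕ, ζ ^ b * tau χ ζ b * ζ ^ (b * (f - 1 - j))
      = ∑ a ∈ range f, χ a * ζ ^ (b * (a + (f - j))) := by
    intro b
    rw [tau, Finset.mul_sum, Finset.sum_mul]
    refine Finset.sum_congr rfl fun a _ => ?_
    have he : b * (a + (f - j)) = b + (a * b + b * (f - 1 - j)) := by
      have h1 : f - 1 - j + 1 = f - j := by omega
      calc b * (a + (f - j)) = b * (a + ((f - 1 - j) + 1)) := by rw [h1]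
      _ = b + (a * b + b * (f - 1 - j)) := by ring
    rw [he, pow_add, pow_add]
    ring
  simp_rw [hterm]
  have h0 : ∑ a ∈ range f, χ a * ζ ^ (0 * (a + (f - j))) = 0 := by
    simp only [zero_mul, pow_zero, mul_one]
    rw [sum_range_zmod (fun x => χ x)]
    exact MulChar.sum_eq_zero_of_ne_one hne
  have hr : ∑ b ∈ range f, ∑ a ∈ range f, χ a * ζ ^ (b * (a + (f - j)))
      = ∑ b ∈ Ico 1 f, ∑ a ∈ range f, χ a * ζ ^ (b * (a + (f - j))) :=
    sum_range_drop_zero (by omega) _ h0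
  rw [← hr, Finset.sum_comm]
  have hin : ∀ a ∈ range f, ∑ b ∈ range f, χ a * ζ ^ (b * (a + (f - j)))
      = χ a * (if f ∣ (a + (f - j)) then (f : ℂ) else 0) := by
    intro a _
    rw [← Finset.mul_sum, ortho hζ]
  rw [Finset.sum_congr rfl hin, chi_sum_filter χ hf (f - j)]
  congr 1
  have hcast : ((f - j : ℕ) : ZMod f) = -(j : ZMod f) := by
    have hfj : (f - j) + j = f := by omega
    have h2 : ((f - j : ℕ) : ZMod f) + (j : ZMod f) = 0 := by
      rw [← Nat.cast_add, hfj, ZMod.natCast_self]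
    linear_combination h2
  rw [hcast, neg_neg]

end tau

section series

open PowerSeries

variable [NeZero f] (χ : DirichletCharacter ℂ f) {ζ : ℂ}

lemma stepA (hf : 1 < f) (hζ : IsPrimitiveRoot ζ f) (hne : χ ≠ 1) :
    (∑ a ∈ Ico 1 f, χ a • (PowerSeries.exp ℂ) ^ a)
      = PowerSeries.C (f : ℂ)⁻¹ * ∑ b ∈ Ico 1 f, PowerSeries.C (ζ ^ b * tau χ ζ b) *
          ∑ j ∈ range f, PowerSeries.C (ζ ^ (b * (f - 1 - j))) * (PowerSeries.exp ℂ) ^ j := by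
  have hf0 : (f : ℂ) ≠ 0 := Nat.cast_ne_zero.mpr (by omega)
  have h1 : ∀ b : ℕ, PowerSeries.C (ζ ^ b * tau χ ζ b) *
      ∑ j ∈ range f, PowerSeries.C (ζ ^ (b * (f - 1 - j))) * (PowerSeries.exp ℂ) ^ j
      = ∑ j ∈ range f, PowerSeries.C (ζ ^ b * tau χ ζ b * ζ ^ (b * (f - 1 - j)))
          * (PowerSeries.exp ℂ) ^ j := by
    intro b
    rw [Finset.mul_sum]
    refine Finset.sum_congr rfl fun j _ => ?_
    simp only [map_mul]
    ring
  simp_rw [h1]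
  rw [Finset.sum_comm, Finset.mul_sum]
  have h2 : ∀ j ∈ range f,
      PowerSeries.C (f : ℂ)⁻¹ * ∑ b ∈ Ico 1 f,
        PowerSeries.C (ζ ^ b * tau χ ζ b * ζ ^ (b * (f - 1 - j))) * (PowerSeries.exp ℂ) ^ j
      = PowerSeries.C (χ (j : ZMod f)) * (PowerSeries.exp ℂ) ^ j := by
    intro j hj
    rw [← Finset.sum_mul, ← map_sum, key_poly χ hf hζ hne (Finset.mem_range.mp hj),
      ← mul_assoc, ← map_mul, inv_mul_cancel_left₀ hf0]
  rw [Finset.sum_congr rfl h2]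
  rw [Finset.range_eq_Ico, Finset.sum_eq_sum_Ico_succ_bot (by omega : 0 < f)]
  have h3 : PowerSeries.C (χ ((0 : ℕ) : ZMod f)) * (PowerSeries.exp ℂ) ^ 0 = 0 := by
    have : ((0 : ℕ) : ZMod f) = (0 : ZMod f) := by simp
    rw [this, chi_zero χ hf, map_zero, zero_mul]
  rw [h3, zero_add]
  exact Finset.sum_congr rfl fun a _ => (PowerSeries.smul_eq_C_mul _ _)

end series

lemma inv_coeff (c : ℂ) (hc : c ≠ 1) : ∀ m : ℕ,
    (m.factorial : ℂ) * (PowerSeries.coeff m) ((PowerSeries.exp ℂ - PowerSeries.C c)⁻¹)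
      = Polynomial.aeval ((1 - c)⁻¹) (V m) := by
  have h1c : (1 : ℂ) - c ≠ 0 := sub_ne_zero.mpr (Ne.symm hc)
  have hcc : PowerSeries.constantCoeff (PowerSeries.exp ℂ - PowerSeries.C c) ≠ 0 := by
    rw [map_sub, PowerSeries.constantCoeff_exp, PowerSeries.constantCoeff_C]; exact h1c
  set g := (PowerSeries.exp ℂ - PowerSeries.C c)⁻¹ with hg
  set w := (1 - c)⁻¹ with hw
  have hw1 : w * (1 - c) = 1 := inv_mul_cancel₀ h1c
  have hmul : g * (PowerSeries.exp ℂ - PowerSeries.C c) = 1 :=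
    PowerSeries.inv_mul_cancel _ hcc
  have hE : ∀ j : ℕ, (PowerSeries.coeff j) (PowerSeries.exp ℂ - PowerSeries.C c)
      = ((j.factorial : ℂ))⁻¹ - if j = 0 then c else 0 := by
    intro j
    rw [map_sub, PowerSeries.coeff_exp, PowerSeries.coeff_C]
    congr 1
    rw [map_div₀, map_one, map_natCast, one_div]
  have key : ∀ m : ℕ, ∑ k ∈ range (m+1), (PowerSeries.coeff k) g *
      (PowerSeries.coeff (m - k)) (PowerSeries.exp ℂ - PowerSeries.C c)
      = if m = 0 then 1 else 0 := by
    intro m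
    have h := congrArg (PowerSeries.coeff m) hmul
    rw [PowerSeries.coeff_mul, Finset.Nat.sum_antidiagonal_eq_sum_range_succ_mk,
      PowerSeries.coeff_one] at h
    exact h
  intro m
  induction m using Nat.strong_induction_on with
  | _ m ih => ?_
  cases m with
  | zero =>
    have h0 := key 0
    rw [Finset.sum_range_one, hE 0] at h0
    norm_num at h0
    rw [V_zero, Polynomial.aeval_X, Nat.factorial_zero, Nat.cast_one, one_mul, hw,
      PowerSeries.coeff_zero_eq_constantCoeff_apply]
    exact (inv_eq_of_mul_eq_one_left h0).symm
  | succ m =>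
    have hk := key (m+1)
    rw [Finset.sum_range_succ, if_neg (Nat.succ_ne_zero m)] at hk
    have hlast : (PowerSeries.coeff (m+1)) g *
        (PowerSeries.coeff (m+1-(m+1))) (PowerSeries.exp ℂ - PowerSeries.C c)
        = (PowerSeries.coeff (m+1)) g * (1 - c) := by
      rw [Nat.sub_self, hE 0]
      simp
    rw [hlast] at hk
    have hrest : ∀ k ∈ range (m+1), (PowerSeries.coeff k) g *
        (PowerSeries.coeff (m+1-k)) (PowerSeries.exp ℂ - PowerSeries.C c)
        = (PowerSeries.coeff k) g * (((m+1-k).factorial : ℂ))⁻¹ := by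
      intro k hk'
      rw [hE, if_neg (by have := Finset.mem_range.mp hk'; omega), sub_zero]
    rw [Finset.sum_congr rfl hrest] at hk
    have hrec : (PowerSeries.coeff (m+1)) g * (1 - c)
        = -∑ k ∈ range (m+1), (PowerSeries.coeff k) g * (((m+1-k).factorial : ℂ))⁻¹ := by
      linear_combination hk
    rw [V_succ, map_mul, map_neg, Polynomial.aeval_X, map_sum]
    have hterm : ∀ i ∈ range (m+1),
        Polynomial.aeval w (((m+1).choose (i+1) : ℤ) • V (m - i))
        = ((m+1).choose (m - (m-i)+1) : ℂ) * Polynomial.aeval w (V (m - i)) := by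
      intro i hi
      have hi' : i ≤ m := by have := Finset.mem_range.mp hi; omega
      rw [map_zsmul, zsmul_eq_mul, show m - (m - i) = i from by omega]
      push_cast
      ring
    rw [Finset.sum_congr rfl hterm]
    rw [show (∑ i ∈ range (m+1),
        ((m+1).choose (m - (m-i)+1) : ℂ) * Polynomial.aeval w (V (m - i)))
      = ∑ k ∈ range (m+1), ((m+1).choose (m - k + 1) : ℂ) * Polynomial.aeval w (V k) from by
        rw [← Finset.sum_range_reflect
          (fun k => ((m+1).choose (m - k + 1) : ℂ) * Polynomial.aeval w (V k)) (m+1)]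
        exact Finset.sum_congr rfl fun i _ => by norm_num]
    have hch : ∀ k ∈ range (m+1), ((m+1).choose (m - k + 1) : ℂ) * Polynomial.aeval w (V k)
        = ((m+1).choose k : ℂ) * ((k.factorial : ℂ) * (PowerSeries.coeff k) g) := by
      intro k hk'
      have hkm : k ≤ m := by have := Finset.mem_range.mp hk'; omega
      rw [show m - k + 1 = (m+1) - k from by omega, Nat.choose_symm (by omega),
        ih k (by omega)]
    rw [Finset.sum_congr rfl hch]
    -- now: goal  ((m+1)! : ℂ) * coeff (m+1) g = -(w * ∑ k, C(m+1,k) * (k! * coeff k g))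
    have e1 : ((m+1).factorial : ℂ) * (PowerSeries.coeff (m+1)) g
        = ((m+1).factorial : ℂ) * (w * ((PowerSeries.coeff (m+1)) g * (1 - c))) := by
      rw [show w * ((PowerSeries.coeff (m+1)) g * (1-c))
          = (PowerSeries.coeff (m+1)) g from by
        rw [mul_comm ((PowerSeries.coeff (m+1)) g) (1-c), ← mul_assoc, hw1, one_mul]]
    rw [e1, hrec, neg_mul, mul_neg, mul_neg, neg_inj, Finset.mul_sum, Finset.mul_sum,
      Finset.mul_sum]
    refine Finset.sum_congr rfl fun k hk' => ?_
    have hkm : k ≤ m := by have := Finset.mem_range.mp hk'; omega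
    have hnat : ((m+1).factorial : ℂ)
        = ((m+1).choose k : ℂ) * (k.factorial : ℂ) * ((m+1-k).factorial : ℂ) := by
      exact_mod_cast congrArg (Nat.cast (R := ℂ))
        (Nat.choose_mul_factorial_mul_factorial (show k ≤ m+1 by omega)).symm
    have hfne : ((m+1-k).factorial : ℂ) ≠ 0 := Nat.cast_ne_zero.mpr (Nat.factorial_ne_zero _)
    rw [hnat]
    field_simp

section master
variable [NeZero f] (χ : DirichletCharacter ℂ f) {ζ : ℂ}

lemma master (hf : 1 < f) (hζ : IsPrimitiveRoot ζ f) (hne : χ ≠ 1) (B : ℕ → ℂ)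
    (hB : (PowerSeries.mk fun n => B n / (n.factorial : ℂ)) *
        (PowerSeries.rescale (f : ℂ) (PowerSeries.exp ℂ) - 1)
      = ∑ a ∈ Finset.Icc 1 f,
          χ (a : ZMod f) • (PowerSeries.X * PowerSeries.rescale (a : ℂ) (PowerSeries.exp ℂ)))
    (m : ℕ) :
    (f : ℂ) * (B (m+1) / ((m+1 : ℕ) : ℂ)) =
      ∑ b ∈ Ico 1 f, ζ ^ b * tau χ ζ b * Polynomial.aeval ((1 - ζ ^ b)⁻¹) (V m) := by
  have hf0 : (f : ℂ) ≠ 0 := Nat.cast_ne_zero.mpr (by omega)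
  have hresc : ∀ a : ℕ, PowerSeries.rescale ((a : ℕ) : ℂ) (PowerSeries.exp ℂ)
      = (PowerSeries.exp ℂ) ^ a := fun a => (PowerSeries.exp_pow_eq_rescale_exp a).symm
  -- rewrite RHS of hB
  have hRHS : ∑ a ∈ Finset.Icc 1 f,
        χ (a : ZMod f) • (PowerSeries.X * PowerSeries.rescale ((a : ℕ) : ℂ) (PowerSeries.exp ℂ))
      = PowerSeries.X * ∑ a ∈ Ico 1 f, χ (a : ZMod f) • (PowerSeries.exp ℂ) ^ a := by
    have hIcc : Finset.Icc 1 f = Finset.Ico 1 (f+1) := Finset.Ico_add_one_right_eq_Icc 1 f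
    rw [hIcc, Finset.sum_Ico_succ_top (by omega : 1 ≤ f)]
    have hzero : χ ((f : ℕ) : ZMod f) •
        (PowerSeries.X * PowerSeries.rescale ((f : ℕ) : ℂ) (PowerSeries.exp ℂ)) = 0 := by
      rw [ZMod.natCast_self, chi_zero χ hf, zero_smul]
    rw [hzero, add_zero, Finset.mul_sum]
    refine Finset.sum_congr rfl fun a _ => ?_
    rw [hresc a, PowerSeries.smul_eq_C_mul, PowerSeries.smul_eq_C_mul]
    ring
  have hB' : (PowerSeries.mk fun n => B n / (n.factorial : ℂ)) * ((PowerSeries.exp ℂ) ^ f - 1)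
      = PowerSeries.X * ∑ a ∈ Ico 1 f, χ (a : ZMod f) • (PowerSeries.exp ℂ) ^ a := by
    rw [← hRHS, ← hB, hresc f]
  have hne1 : ∀ b ∈ Ico 1 f, ζ ^ b ≠ 1 := by
    intro b hb
    have hb' := Finset.mem_Ico.mp hb
    exact hζ.pow_ne_one_of_pos_of_lt (by omega) (by omega)
  have hcc : ∀ b ∈ Ico 1 f,
      PowerSeries.constantCoeff (PowerSeries.exp ℂ - PowerSeries.C (ζ ^ b)) ≠ 0 := by
    intro b hb
    rw [map_sub, PowerSeries.constantCoeff_exp, PowerSeries.constantCoeff_C]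
    exact sub_ne_zero.mpr (Ne.symm (hne1 b hb))
  have hGb : ∀ b ∈ Ico 1 f,
      (∑ j ∈ range f, PowerSeries.C (ζ ^ (b*(f-1-j))) * (PowerSeries.exp ℂ) ^ j)
        = ((PowerSeries.exp ℂ) ^ f - 1) * (PowerSeries.exp ℂ - PowerSeries.C (ζ ^ b))⁻¹ := by
    intro b hb
    have hgeom := geom_sum₂_mul (PowerSeries.exp ℂ) (PowerSeries.C (ζ ^ b)) f
    have hCpow : (PowerSeries.C (ζ ^ b)) ^ f = 1 := by
      rw [← map_pow, ← pow_mul, mul_comm, pow_mul, hζ.pow_eq_one, one_pow, map_one]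
    rw [hCpow] at hgeom
    have hsum_eq : (∑ j ∈ range f, PowerSeries.C (ζ ^ (b*(f-1-j))) * (PowerSeries.exp ℂ) ^ j)
        = ∑ j ∈ range f, (PowerSeries.exp ℂ) ^ j * (PowerSeries.C (ζ ^ b)) ^ (f-1-j) := by
      refine Finset.sum_congr rfl fun j _ => ?_
      rw [← map_pow, ← pow_mul]
      ring
    rw [hsum_eq]
    have hinv := PowerSeries.mul_inv_cancel _ (hcc b hb)
    calc (∑ j ∈ range f, (PowerSeries.exp ℂ) ^ j * (PowerSeries.C (ζ ^ b)) ^ (f-1-j))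
        = (∑ j ∈ range f, (PowerSeries.exp ℂ) ^ j * (PowerSeries.C (ζ ^ b)) ^ (f-1-j)) *
          ((PowerSeries.exp ℂ - PowerSeries.C (ζ ^ b)) *
            (PowerSeries.exp ℂ - PowerSeries.C (ζ ^ b))⁻¹) := by rw [hinv, mul_one]
      _ = ((PowerSeries.exp ℂ) ^ f - 1) * (PowerSeries.exp ℂ - PowerSeries.C (ζ ^ b))⁻¹ := by
          rw [← mul_assoc, hgeom]
  have hmain : (PowerSeries.C (f : ℂ)) * (PowerSeries.mk fun n => B n / (n.factorial : ℂ))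
        * ((PowerSeries.exp ℂ) ^ f - 1)
      = (∑ b ∈ Ico 1 f, PowerSeries.C (ζ ^ b * tau χ ζ b) *
          (PowerSeries.X * (PowerSeries.exp ℂ - PowerSeries.C (ζ ^ b))⁻¹))
        * ((PowerSeries.exp ℂ) ^ f - 1) := by
    calc (PowerSeries.C (f : ℂ)) * (PowerSeries.mk fun n => B n / (n.factorial : ℂ))
          * ((PowerSeries.exp ℂ) ^ f - 1)
        = (PowerSeries.C (f : ℂ)) *
            ((PowerSeries.mk fun n => B n / (n.factorial : ℂ)) * ((PowerSeries.exp ℂ) ^ f - 1)) := by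
          ring
      _ = (PowerSeries.C (f : ℂ)) *
            (PowerSeries.X * ∑ a ∈ Ico 1 f, χ (a : ZMod f) • (PowerSeries.exp ℂ) ^ a) := by
          rw [hB']
      _ = (PowerSeries.C (f : ℂ)) * (PowerSeries.X *
            (PowerSeries.C (f : ℂ)⁻¹ * ∑ b ∈ Ico 1 f, PowerSeries.C (ζ ^ b * tau χ ζ b) *
              ∑ j ∈ range f, PowerSeries.C (ζ ^ (b*(f-1-j))) * (PowerSeries.exp ℂ) ^ j)) := by
          rw [stepA χ hf hζ hne]
      _ = ((PowerSeries.C (f : ℂ)) * (PowerSeries.C (f : ℂ)⁻¹)) * (PowerSeries.X *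
            (∑ b ∈ Ico 1 f, PowerSeries.C (ζ ^ b * tau χ ζ b) *
              ∑ j ∈ range f, PowerSeries.C (ζ ^ (b*(f-1-j))) * (PowerSeries.exp ℂ) ^ j)) := by
          ring
      _ = PowerSeries.X * (∑ b ∈ Ico 1 f, PowerSeries.C (ζ ^ b * tau χ ζ b) *
              ∑ j ∈ range f, PowerSeries.C (ζ ^ (b*(f-1-j))) * (PowerSeries.exp ℂ) ^ j) := by
          rw [← map_mul, mul_inv_cancel₀ hf0, map_one, one_mul]
      _ = PowerSeries.X * (∑ b ∈ Ico 1 f, PowerSeries.C (ζ ^ b * tau χ ζ b) *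
            (((PowerSeries.exp ℂ) ^ f - 1) *
              (PowerSeries.exp ℂ - PowerSeries.C (ζ ^ b))⁻¹)) := by
          rw [Finset.sum_congr rfl fun b hb => by rw [hGb b hb]]
      _ = (∑ b ∈ Ico 1 f, PowerSeries.C (ζ ^ b * tau χ ζ b) *
            (PowerSeries.X * (PowerSeries.exp ℂ - PowerSeries.C (ζ ^ b))⁻¹))
          * ((PowerSeries.exp ℂ) ^ f - 1) := by
          rw [Finset.mul_sum, Finset.sum_mul]
          exact Finset.sum_congr rfl fun b _ => by ring
  have hEf : ((PowerSeries.exp ℂ) ^ f - 1 : PowerSeries ℂ) ≠ 0 := by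
    intro h
    have h1 := congrArg (PowerSeries.coeff 1) h
    rw [map_sub, PowerSeries.coeff_one, ← hresc f, PowerSeries.coeff_rescale,
      PowerSeries.coeff_exp, map_zero] at h1
    simp only [pow_one, Nat.factorial_one, Nat.cast_one, div_one, map_one, mul_one,
      if_neg one_ne_zero, sub_zero] at h1
    exact hf0 h1
  have hkey := mul_right_cancel₀ hEf hmain
  have hcoeff := congrArg (PowerSeries.coeff (m+1)) hkey
  rw [map_sum] at hcoeff
  simp only [PowerSeries.coeff_C_mul, PowerSeries.coeff_succ_X_mul, PowerSeries.coeff_mk]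
    at hcoeff
  -- hcoeff : f * (B (m+1) / (m+1)!) = ∑ b, ζ^b * τ b * coeff m gb
  have hfinal := congrArg (fun z : ℂ => (m.factorial : ℂ) * z) hcoeff
  have hmfac : (m.factorial : ℂ) ≠ 0 := Nat.cast_ne_zero.mpr (Nat.factorial_ne_zero _)
  have hLeq : (m.factorial : ℂ) * ((f : ℂ) * (B (m+1) / ((m+1).factorial : ℂ)))
      = (f : ℂ) * (B (m+1) / ((m+1 : ℕ) : ℂ)) := by
    rw [Nat.factorial_succ]
    push_cast
    have hm1 : ((m : ℂ) + 1) ≠ 0 := Nat.cast_add_one_ne_zero m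
    field_simp
  rw [hLeq] at hfinal
  rw [hfinal, Finset.mul_sum]
  refine Finset.sum_congr rfl fun b hb => ?_
  rw [← inv_coeff (ζ ^ b) (hne1 b hb) m]
  ring

end master

lemma fpow_int (f m : ℕ) : IsIntegral ℤ ((f : ℂ) ^ m) := by
  have : ((f : ℂ) ^ m) = ((((f : ℤ) ^ m : ℤ)) : ℂ) := by push_cast; ring
  rw [this]
  exact isIntegral_intCast _

/-- the ring of complex numbers integral over `ℤ[1/f]`. -/
def Rf (f : ℕ) : Subring ℂ where
  carrier := {x : ℂ | ∃ m : ℕ, IsIntegral ℤ ((f : ℂ) ^ m * x)}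
  zero_mem' := ⟨0, by simpa using isIntegral_zero⟩
  one_mem' := ⟨0, by simpa using isIntegral_one⟩
  add_mem' := by
    rintro x y ⟨mx, hx⟩ ⟨my, hy⟩
    refine ⟨mx + my, ?_⟩
    have h : (f : ℂ) ^ (mx + my) * (x + y)
        = (f : ℂ) ^ my * ((f : ℂ) ^ mx * x) + (f : ℂ) ^ mx * ((f : ℂ) ^ my * y) := by ring
    rw [h]
    exact ((fpow_int f my).mul hx).add ((fpow_int f mx).mul hy)
  neg_mem' := by
    rintro x ⟨m, h⟩
    exact ⟨m, by rw [mul_neg]; exact h.neg⟩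
  mul_mem' := by
    rintro x y ⟨mx, hx⟩ ⟨my, hy⟩
    refine ⟨mx + my, ?_⟩
    have h : (f : ℂ) ^ (mx + my) * (x * y) = ((f : ℂ) ^ mx * x) * ((f : ℂ) ^ my * y) := by ring
    rw [h]
    exact hx.mul hy

lemma mem_Rf_of_int {f : ℕ} {x : ℂ} (h : IsIntegral ℤ x) : x ∈ Rf f :=
  ⟨0, by simpa using h⟩

lemma mem_Rf_div {f : ℕ} {x : ℂ} (h : (f : ℂ) * x ∈ Rf f) : x ∈ Rf f := by
  obtain ⟨m, hm⟩ := h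
  exact ⟨m + 1, by rw [pow_succ, mul_assoc]; exact hm⟩

lemma aeval_mem_subring (S : Subring ℂ) {x : ℂ} (hx : x ∈ S) (p : Polynomial ℤ) :
    Polynomial.aeval x p ∈ S := by
  have h := Polynomial.aeval_algHom_apply (S.subtype.toIntAlgHom) (⟨x, hx⟩ : S) p
  have h2 : (S.subtype.toIntAlgHom (⟨x, hx⟩ : S)) = x := rfl
  rw [h2] at h
  rw [h]
  exact (Polynomial.aeval (⟨x, hx⟩ : S) p).2

lemma w_mem {f : ℕ} [NeZero f] {ζ : ℂ} (hf : 1 < f) (hζ : IsPrimitiveRoot ζ f) {b : ℕ}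
    (hb : b ∈ Ico 1 f) : (1 - ζ ^ b)⁻¹ ∈ Rf f := by
  have hb' := Finset.mem_Ico.mp hb
  have hprod : ∏ j ∈ Ico 1 f, (1 - ζ ^ j) = (f : ℂ) := by
    obtain ⟨f', rfl⟩ : ∃ f', f = f' + 1 := ⟨f - 1, by omega⟩
    have hpo := hζ.prod_one_sub_pow_eq_order
    rw [Finset.prod_Ico_eq_prod_range]
    simp only [Nat.add_sub_cancel]
    push_cast
    rw [← hpo]
    exact Finset.prod_congr rfl fun k _ => by rw [add_comm 1 k]
  have hzb : (1 - ζ ^ b) ≠ 0 :=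
    sub_ne_zero.mpr (Ne.symm (hζ.pow_ne_one_of_pos_of_lt (by omega) (by omega)))
  refine ⟨1, ?_⟩
  have hP : (f : ℂ) ^ 1 * (1 - ζ ^ b)⁻¹ = ∏ j ∈ (Ico 1 f).erase b, (1 - ζ ^ j) := by
    rw [pow_one, ← hprod, ← Finset.mul_prod_erase _ _ hb]
    field_simp
  rw [hP]
  exact int_prod fun j _ => isIntegral_one.sub (pow_root_int hζ.pow_eq_one (by omega) j)

lemma isPIntegral_of_mem_Rf (f p : ℕ) (hf : 1 < f) (hp : p.Prime) (hpf : ¬ p ∣ f) {x : ℂ}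
    (hx : x ∈ Rf f) : IsPIntegral p x := by
  haveI : Fact p.Prime := ⟨hp⟩
  obtain ⟨m, P, hPm, hPr⟩ := hx
  have hfQ : ((f : ℚ)) ≠ 0 := Nat.cast_ne_zero.mpr (by omega)
  set s : ℚ := ((f : ℚ) ^ m)⁻¹ with hs
  have hs0 : s ≠ 0 := inv_ne_zero (pow_ne_zero _ hfQ)
  refine ⟨(P.map (Int.castRingHom ℚ)).scaleRoots s, ?_, ?_, ?_⟩
  · exact (Polynomial.monic_scaleRoots_iff s).mpr (hPm.map _)
  · intro i
    rw [Polynomial.coeff_scaleRoots]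
    by_cases h0 : (P.map (Int.castRingHom ℚ)).coeff i = 0
    · rw [h0, zero_mul, padicValRat.zero]
    · rw [padicValRat.mul h0 (pow_ne_zero _ hs0)]
      have h1 : 0 ≤ padicValRat p ((P.map (Int.castRingHom ℚ)).coeff i) := by
        rw [Polynomial.coeff_map]
        have : (Int.castRingHom ℚ) (P.coeff i) = ((P.coeff i : ℤ) : ℚ) := rfl
        rw [this, padicValRat.of_int]
        exact_mod_cast Int.natCast_nonneg _
      have h2 : padicValRat p (s ^ ((P.map (Int.castRingHom ℚ)).natDegree - i)) = 0 := by
        have hvs : padicValRat p s = 0 := by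
          rw [hs, padicValRat.inv]
          have : ((f : ℚ) ^ m) = (((f ^ m : ℕ)) : ℚ) := by push_cast; ring
          rw [this, padicValRat.of_nat]
          have : padicValNat p (f ^ m) = 0 :=
            padicValNat.eq_zero_of_not_dvd
              (fun hc => hpf (hp.dvd_of_dvd_pow hc))
          rw [this]
          simp
        rw [padicValRat.pow s, hvs, mul_zero]
      rw [h2, add_zero]
      exact h1
  · have hroot : Polynomial.eval₂ (algebraMap ℚ ℂ) ((f : ℂ) ^ m * x)
        (P.map (Int.castRingHom ℚ)) = 0 := by
      rw [Polynomial.eval₂_map]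
      have heq : (algebraMap ℚ ℂ).comp (Int.castRingHom ℚ) = algebraMap ℤ ℂ :=
        Subsingleton.elim _ _
      rw [heq]
      exact hPr
    have h := Polynomial.scaleRoots_eval₂_eq_zero (algebraMap ℚ ℂ) hroot (s := s)
    have hmap : (algebraMap ℚ ℂ) s * ((f : ℂ) ^ m * x) = x := by
      rw [hs, map_inv₀, map_pow, map_natCast]
      have hfC : ((f : ℂ)) ^ m ≠ 0 := pow_ne_zero _ (Nat.cast_ne_zero.mpr (by omega))
      field_simp
    rw [hmap] at h
    rw [Polynomial.aeval_def]
    exact h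

end CarlitzAux
end CarlitzAux


open CarlitzAux in
/-- Carlitz's theorem: let `χ` be a nonprincipal (primitive) Dirichlet
character of conductor `f > 1` with generalized Bernoulli numbers `B_{n,χ}`.
If `f` has at least two distinct prime factors then `B_{n,χ}/n` is an
algebraic integer for every `n ≥ 1`; if `f = q^r` is a prime power then
`B_{n,χ}/n` is `p`-integral for every prime `p` not dividing `f`. -/
theorem carlitz_genBernoulli_integral (f : ℕ) (hf : 1 < f)
    (χ : DirichletCharacter ℂ f) (hprim : χ.IsPrimitive) (hne : χ ≠ 1)
    (B : ℕ → ℂ) (hB : IsGenBernoulli χ B) :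
    (2 ≤ f.primeFactors.card → ∀ n : ℕ, 1 ≤ n → IsIntegral ℤ (B n / n)) ∧
    (∀ q r : ℕ, q.Prime → f = q ^ r →
      ∀ p : ℕ, p.Prime → ¬ p ∣ f → ∀ n : ℕ, 1 ≤ n → IsPIntegral p (B n / n)) := by
  haveI : NeZero f := ⟨by omega⟩
  have hf0 : (f : ℂ) ≠ 0 := Nat.cast_ne_zero.mpr (by omega)
  set ζ : ℂ := Complex.exp (2 * Real.pi * Complex.I / f) with hζdef
  have hζ : IsPrimitiveRoot ζ f := Complex.isPrimitiveRoot_exp f (by omega)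
  rw [IsGenBernoulli] at hB
  constructor
  · -- f has at least two prime factors
    intro hcard n hn
    obtain ⟨m, rfl⟩ : ∃ m, n = m + 1 := ⟨n - 1, by omega⟩
    have hmaster := master χ hf hζ hne B hB m
    have hnpp : ¬ IsPrimePow f := fun hpp => by
      have := isPrimePow_iff_card_primeFactors_eq_one.mp hpp
      omega
    have hΦ : Polynomial.eval 1 (Polynomial.cyclotomic f ℤ) = 1 := by
      refine Polynomial.eval_one_cyclotomic_not_prime_pow ?_
      intro p hp k hk
      rcases Nat.eq_zero_or_pos k with hk0 | hk0
      · rw [hk0, pow_zero] at hk; omega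
      · exact hnpp ⟨p, k, hp.prime, hk0, hk⟩
    obtain ⟨W, hW⟩ : (Polynomial.X - Polynomial.C 1) ∣ (Polynomial.cyclotomic f ℤ - 1) :=
      Polynomial.dvd_iff_isRoot.mpr (by simp [Polynomial.IsRoot, hΦ])
    set U := (V m).comp W with hU
    have hwb : ∀ b, b.Coprime f → (1 - ζ ^ b)⁻¹ = Polynomial.aeval (ζ ^ b) W := by
      intro b hcop
      have hprt : IsPrimitiveRoot (ζ ^ b) f := hζ.pow_of_coprime b hcop
      have hcyc : Polynomial.aeval (ζ ^ b) (Polynomial.cyclotomic f ℤ) = 0 := by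
        rw [Polynomial.aeval_def, Polynomial.eval₂_eq_eval_map, algebraMap_int_eq,
          Polynomial.map_cyclotomic_int]
        exact hprt.isRoot_cyclotomic (by omega)
      have h1 := congrArg (Polynomial.aeval (ζ ^ b)) hW
      rw [map_sub, hcyc, map_mul, map_sub, Polynomial.aeval_X, Polynomial.aeval_C] at h1
      simp only [map_one] at h1
      refine inv_eq_of_mul_eq_one_right ?_
      linear_combination h1
    have hsum : (f : ℂ) * (B (m+1) / ((m+1 : ℕ) : ℂ))
        = ∑ b ∈ range f, tau χ ζ b * (ζ ^ b * Polynomial.aeval (ζ ^ b) U) := by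
      rw [hmaster, Finset.range_eq_Ico, Finset.sum_eq_sum_Ico_succ_bot (by omega : 0 < f)]
      have h0 : tau χ ζ 0 * (ζ ^ 0 * Polynomial.aeval (ζ ^ 0) U) = 0 := by
        rw [tau_eq_zero χ hζ hprim (by simp [Nat.coprime_zero_left]; omega), zero_mul]
      rw [h0, zero_add]
      refine Finset.sum_congr rfl fun b hb => ?_
      by_cases hcop : b.Coprime f
      · rw [hU, Polynomial.aeval_comp, ← hwb b hcop]
        ring
      · rw [tau_eq_zero χ hζ hprim hcop]
        ring
    have hexp : ∀ b : ℕ, ζ ^ b * Polynomial.aeval (ζ ^ b) U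
        = ∑ j ∈ range (U.natDegree + 1), (U.coeff j : ℂ) * ζ ^ (b * (j+1)) := by
      intro b
      rw [Polynomial.aeval_eq_sum_range, Finset.mul_sum]
      refine Finset.sum_congr rfl fun j _ => ?_
      rw [zsmul_eq_mul]
      have he : b * (j + 1) = b + b * j := by ring
      rw [he, pow_add, pow_mul]
      ring
    have hswap : ∑ b ∈ range f, tau χ ζ b * (ζ ^ b * Polynomial.aeval (ζ ^ b) U)
        = ∑ j ∈ range (U.natDegree + 1),
            (U.coeff j : ℂ) * ((f : ℂ) * χ (-(((j+1 : ℕ)) : ZMod f))) := by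
      simp_rw [hexp, Finset.mul_sum]
      rw [Finset.sum_comm]
      refine Finset.sum_congr rfl fun j _ => ?_
      have hpull : ∑ b ∈ range f, tau χ ζ b * ((U.coeff j : ℂ) * ζ ^ (b*(j+1)))
          = (U.coeff j : ℂ) * ∑ b ∈ range f, tau χ ζ b * ζ ^ (b*(j+1)) := by
        rw [Finset.mul_sum]
        exact Finset.sum_congr rfl fun b _ => by ring
      rw [hpull]
      congr 1
      have htau : ∀ b : ℕ, tau χ ζ b * ζ ^ (b*(j+1))
          = ∑ a ∈ range f, χ a * ζ ^ (b * (a + (j+1))) := by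
        intro b
        rw [tau, Finset.sum_mul]
        refine Finset.sum_congr rfl fun a _ => ?_
        have he : b * (a + (j+1)) = a * b + b * (j+1) := by ring
        rw [he, pow_add]
        ring
      simp_rw [htau]
      rw [Finset.sum_comm]
      have hin : ∀ a ∈ range f, ∑ b ∈ range f, χ a * ζ ^ (b * (a + (j+1)))
          = χ a * (if f ∣ (a + (j+1)) then (f : ℂ) else 0) := fun a _ => by
        rw [← Finset.mul_sum, ortho hζ]
      rw [Finset.sum_congr rfl hin, chi_sum_filter χ hf (j+1)]
    have hfinal : B (m+1) / ((m+1 : ℕ) : ℂ)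
        = ∑ j ∈ range (U.natDegree + 1), (U.coeff j : ℂ) * χ (-(((j+1 : ℕ)) : ZMod f)) := by
      refine mul_left_cancel₀ hf0 ?_
      rw [hsum, hswap, Finset.mul_sum]
      exact Finset.sum_congr rfl fun j _ => by ring
    push_cast at hfinal ⊢
    rw [hfinal]
    exact int_sum fun j _ => (isIntegral_intCast _).mul (chi_int χ _ hf)
  · -- prime power case
    intro q r hq hfqr p hp hpf n hn
    obtain ⟨m, rfl⟩ : ∃ m, n = m + 1 := ⟨n - 1, by omega⟩
    have hmaster := master χ hf hζ hne B hB m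
    have hmem : B (m+1) / ((m+1 : ℕ) : ℂ) ∈ Rf f := by
      apply mem_Rf_div
      rw [hmaster]
      refine Subring.sum_mem _ fun b hb => ?_
      refine Subring.mul_mem _ (Subring.mul_mem _ ?_ ?_) ?_
      · exact mem_Rf_of_int (pow_root_int hζ.pow_eq_one (by omega) b)
      · exact mem_Rf_of_int (tau_int χ hf hζ.pow_eq_one b)
      · exact aeval_mem_subring (Rf f) (w_mem hf hζ hb) (V m)
    have := isPIntegral_of_mem_Rf f p hf hp hpf hmem
    push_cast at this ⊢
    exact this
end
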